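/- arXiv:2407.18511 — 7 statements merged into one kernel-verified Lean document; each statement's English description precedes it below -/
import Mathlib

section
/- Let m ≥ 1, let ρ > 0, and let x, z ∈ Δ_ρ with x ≠ z, and set k := ‖x−z‖_∞/ρ (which is a positive integer). Then there exists a path p = (ξ_0, ξ_1, …, ξ_k) in Δ_ρ from x to z of length k (i.e. ξ_0 = x, ξ_k = z, and ‖ξ_ℓ − ξ_{ℓ−1}‖_∞ ≤ ρ for all ℓ ∈ {1,…,k}) such that ‖ξ_ℓ − x‖_∞ = ℓρ and ‖ξ_ℓ − z‖_∞ = (k−ℓ)ρ for every ℓ ∈ {0,…,k}, ‖ξ_{ℓ+1} − ξ_ℓ‖_∞ = ρ for every ℓ ∈ {0,…,k−1}, and moreover ‖ξ_ℓ − y‖_∞ ≤ max{‖x−y‖_∞, ‖y−z‖_∞} for every y ∈ Δ_ρ and every ℓ ∈ {0,…,k}. -/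
noncomputable section

/-- The grid `Δ_ρ = ρℤ^m` in `ℝ^m` (with the maximum norm). -/
def grid (m : ℕ) (ρ : ℝ) : Set (Fin m → ℝ) := {x | ∀ j, ∃ k : ℤ, x j = ρ * k}

/-- `p` is a path of length `k` from `x` to `z` in the grid `Δ_ρ` with step size at most `ρ`. -/
def IsPath (m : ℕ) (ρ : ℝ) (x z : Fin m → ℝ) (k : ℕ) (p : ℕ → Fin m → ℝ) : Prop :=
  p 0 = x ∧ p k = z ∧ (∀ ℓ ≤ k, p ℓ ∈ grid m ρ) ∧
  ∀ ℓ, 1 ≤ ℓ → ℓ ≤ k → dist (p ℓ) (p (ℓ - 1)) ≤ ρ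

/-- clamping `n` to `[-l, l]` when `|n| ≤ l` gives `n`. -/
lemma int_clamp_full (l n : ℤ) (hn : |n| ≤ l) : max (-l) (min l n) = n := by
  simp only [abs, max_def, min_def] at *; split_ifs at * <;> omega

lemma int_clamp_zero (n : ℤ) : max (-(0:ℤ)) (min 0 n) = 0 := by
  simp only [abs, max_def, min_def]; split_ifs <;> omega

lemma int_clamp_abs_le (l n : ℤ) (h0 : 0 ≤ l) : |max (-l) (min l n)| ≤ l := by
  simp only [abs, max_def, min_def] at *; split_ifs at * <;> omega

lemma int_clamp_abs_eq (l n : ℤ) (h0 : 0 ≤ l) (h : l ≤ |n|) : |max (-l) (min l n)| = l := by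
  simp only [abs, max_def, min_def] at *; split_ifs at * <;> omega

lemma int_clamp_dz_le (l k n : ℤ) (h0 : 0 ≤ l) (hlk : l ≤ k) (hn : |n| ≤ k) :
    |max (-l) (min l n) - n| ≤ k - l := by
  simp only [abs, max_def, min_def] at *; split_ifs at * <;> omega

lemma int_clamp_dz_eq (l k n : ℤ) (h0 : 0 ≤ l) (hlk : l ≤ k) (hn : |n| = k) :
    |max (-l) (min l n) - n| = k - l := by
  simp only [abs, max_def, min_def] at *; split_ifs at * <;> omega

lemma int_clamp_step_le (l n : ℤ) (h0 : 0 ≤ l) :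
    |max (-(l+1)) (min (l+1) n) - max (-l) (min l n)| ≤ 1 := by
  simp only [abs, max_def, min_def] at *; split_ifs at * <;> omega

lemma int_clamp_step_eq (l k n : ℤ) (h0 : 0 ≤ l) (hlk : l < k) (hn : |n| = k) :
    |max (-(l+1)) (min (l+1) n) - max (-l) (min l n)| = 1 := by
  simp only [abs, max_def, min_def] at *; split_ifs at * <;> omega

lemma int_clamp_between (l n a e : ℤ) (h0 : 0 ≤ l) :
    |a + max (-l) (min l n) - e| ≤ max |a - e| |a + n - e| := by
  simp only [abs, max_def, min_def] at *; split_ifs at * <;> omega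

set_option maxHeartbeats 1000000 in
theorem stmt0 (m : ℕ) (hm : 1 ≤ m) (ρ : ℝ) (hρ : 0 < ρ)
    (x z : Fin m → ℝ) (hx : x ∈ grid m ρ) (hz : z ∈ grid m ρ) (hxz : x ≠ z)
    (k : ℕ) (hk : dist x z = (k : ℝ) * ρ) :
    1 ≤ k ∧ ∃ p : ℕ → Fin m → ℝ,
      IsPath m ρ x z k p ∧
      (∀ ℓ ≤ k, dist (p ℓ) x = (ℓ : ℝ) * ρ) ∧
      (∀ ℓ ≤ k, dist (p ℓ) z = ((k : ℝ) - (ℓ : ℝ)) * ρ) ∧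
      (∀ ℓ < k, dist (p (ℓ + 1)) (p ℓ) = ρ) ∧
      (∀ y ∈ grid m ρ, ∀ ℓ ≤ k, dist (p ℓ) y ≤ max (dist x y) (dist y z)) := by
  classical
  have hm' : Nonempty (Fin m) := ⟨⟨0, hm⟩⟩
  choose a ha using hx
  choose b hb using hz
  set n : Fin m → ℤ := fun j => b j - a j with hn
  -- coordinate distance between x and z
  have hdcoord : ∀ j, dist (x j) (z j) = ρ * ((|n j| : ℤ) : ℝ) := by
    intro j
    rw [Real.dist_eq, ha, hb, ← mul_sub, abs_mul, abs_of_pos hρ]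
    congr 1
    rw [abs_sub_comm]
    push_cast [hn]
    ring_nf
  -- every |n j| ≤ k
  have hnk : ∀ j, |n j| ≤ (k : ℤ) := by
    intro j
    have h1 : dist (x j) (z j) ≤ dist x z := dist_le_pi_dist x z j
    rw [hdcoord j, hk] at h1
    have h2 : ((|n j| : ℤ) : ℝ) ≤ (k : ℝ) := by nlinarith
    exact_mod_cast h2
  -- a coordinate achieving the max
  obtain ⟨j0, -, hj0⟩ := Finset.exists_max_image (Finset.univ : Finset (Fin m))
    (fun j => |n j|) ⟨Classical.arbitrary (Fin m), Finset.mem_univ _⟩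
  have hj0' : ∀ j, |n j| ≤ |n j0| := fun j => hj0 j (Finset.mem_univ j)
  have hj0k : |n j0| = (k : ℤ) := by
    have hle : dist x z ≤ ρ * ((|n j0| : ℤ) : ℝ) := by
      apply (dist_pi_le_iff (by positivity)).2
      intro j
      rw [hdcoord j]
      have h := hj0' j
      have h' : ((|n j| : ℤ) : ℝ) ≤ ((|n j0| : ℤ) : ℝ) := by exact_mod_cast h
      nlinarith
    rw [hk] at hle
    have h2 : (k : ℝ) ≤ ((|n j0| : ℤ) : ℝ) := by nlinarith
    have h3 : (k : ℤ) ≤ |n j0| := by exact_mod_cast h2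
    exact le_antisymm (hnk j0) h3
  -- k ≥ 1
  have hk1 : 1 ≤ k := by
    rcases Nat.eq_zero_or_pos k with h | h
    · exfalso
      apply hxz
      have : dist x z = 0 := by rw [hk, h]; simp
      exact dist_eq_zero.1 this
    · exact h
  refine ⟨hk1, ?_⟩
  -- the clamped increments
  set c : ℕ → Fin m → ℤ := fun ℓ j => max (-(ℓ : ℤ)) (min (ℓ : ℤ) (n j)) with hc
  set p : ℕ → Fin m → ℝ := fun ℓ j => ρ * ((a j : ℝ) + (c ℓ j : ℝ)) with hp
  have hpij : ∀ ℓ ℓ' j, dist (p ℓ j) (p ℓ' j) = ρ * ((|c ℓ j - c ℓ' j| : ℤ) : ℝ) := by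
    intro ℓ ℓ' j
    rw [hp]
    simp only
    rw [Real.dist_eq, ← mul_sub, abs_mul, abs_of_pos hρ]
    congr 1
    push_cast
    ring_nf
  have hc0 : ∀ j, c 0 j = 0 := by
    intro j
    simp only [hc, Nat.cast_zero]
    exact int_clamp_zero (n j)
  have hck : ∀ j, c k j = n j := by
    intro j
    exact int_clamp_full _ _ (hnk j)
  have hp0 : p 0 = x := by
    funext j
    rw [hp, ha j]
    simp [hc0 j]
  have hpk : p k = z := by
    funext j
    simp only [hp, hb j, hck j, hn]
    push_cast
    ring
  -- generic distance equality from coordinatewise bounds + attainment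
  have hde : ∀ (f g : Fin m → ℝ) (r : ℝ), 0 ≤ r → (∀ j, dist (f j) (g j) ≤ r) →
      (∃ j, dist (f j) (g j) = r) → dist f g = r := by
    rintro f g r hr hub ⟨j, hj⟩
    refine le_antisymm ((dist_pi_le_iff hr).2 hub) ?_
    rw [← hj]; exact dist_le_pi_dist f g j
  -- dist (p ℓ) x = ℓ ρ
  have hdx : ∀ ℓ ≤ k, dist (p ℓ) x = (ℓ : ℝ) * ρ := by
    intro ℓ hℓ
    rw [← hp0]
    apply hde
    · positivity
    · intro j
      rw [hpij, hc0 j, sub_zero]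
      have h1 : |c ℓ j| ≤ (ℓ : ℤ) := int_clamp_abs_le _ _ (Int.ofNat_nonneg ℓ)
      have h1' : ((|c ℓ j| : ℤ) : ℝ) ≤ (ℓ : ℝ) := by exact_mod_cast h1
      nlinarith
    · refine ⟨j0, ?_⟩
      rw [hpij, hc0 j0, sub_zero]
      have h1 : |c ℓ j0| = (ℓ : ℤ) := by
        apply int_clamp_abs_eq _ _ (Int.ofNat_nonneg ℓ)
        rw [hj0k]
        exact_mod_cast hℓ
      rw [h1]
      push_cast
      ring
  -- dist (p ℓ) z = (k - ℓ) ρ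
  have hdz : ∀ ℓ ≤ k, dist (p ℓ) z = ((k : ℝ) - (ℓ : ℝ)) * ρ := by
    intro ℓ hℓ
    have h3 : (ℓ : ℤ) ≤ (k : ℤ) := by exact_mod_cast hℓ
    have hkl : (ℓ : ℝ) ≤ (k : ℝ) := by exact_mod_cast hℓ
    rw [← hpk]
    apply hde
    · nlinarith
    · intro j
      rw [hpij, hck j]
      have h1 : |c ℓ j - n j| ≤ (k : ℤ) - (ℓ : ℤ) :=
        int_clamp_dz_le _ _ _ (Int.ofNat_nonneg ℓ) h3 (hnk j)
      have h1' : ((|c ℓ j - n j| : ℤ) : ℝ) ≤ (k : ℝ) - (ℓ : ℝ) := by exact_mod_cast h1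
      nlinarith
    · refine ⟨j0, ?_⟩
      rw [hpij, hck j0]
      have h1 : |c ℓ j0 - n j0| = (k : ℤ) - (ℓ : ℤ) :=
        int_clamp_dz_eq _ _ _ (Int.ofNat_nonneg ℓ) h3 hj0k
      rw [h1]
      push_cast
      ring
  -- unit steps
  have hstep : ∀ ℓ < k, dist (p (ℓ + 1)) (p ℓ) = ρ := by
    intro ℓ hℓ
    have h3 : (ℓ : ℤ) < (k : ℤ) := by exact_mod_cast hℓ
    apply hde
    · exact le_of_lt hρ
    · intro j
      rw [hpij]
      have h1 : |c (ℓ+1) j - c ℓ j| ≤ 1 := by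
        have := int_clamp_step_le (ℓ : ℤ) (n j) (Int.ofNat_nonneg ℓ)
        simpa [hc, Nat.cast_add, Nat.cast_one] using this
      have h1' : ((|c (ℓ+1) j - c ℓ j| : ℤ) : ℝ) ≤ 1 := by exact_mod_cast h1
      nlinarith
    · refine ⟨j0, ?_⟩
      rw [hpij]
      have h1 : |c (ℓ+1) j0 - c ℓ j0| = 1 := by
        have := int_clamp_step_eq (ℓ : ℤ) (k : ℤ) (n j0) (Int.ofNat_nonneg ℓ) h3 hj0k
        simpa [hc, Nat.cast_add, Nat.cast_one] using this
      rw [h1]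
      push_cast
      ring
  refine ⟨p, ⟨hp0, hpk, ?_, ?_⟩, hdx, hdz, hstep, ?_⟩
  · -- grid membership
    intro ℓ _ j
    exact ⟨a j + c ℓ j, by rw [hp]; push_cast; ring⟩
  · -- step at most ρ
    intro ℓ h1 h2
    obtain ⟨ℓ', rfl⟩ : ∃ ℓ', ℓ = ℓ' + 1 := ⟨ℓ - 1, (Nat.succ_pred_eq_of_pos h1).symm⟩
    simp only [Nat.add_sub_cancel]
    exact le_of_eq (hstep ℓ' (by omega))
  · -- the max bound
    intro y hy ℓ hℓ
    choose e he using hy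
    apply (dist_pi_le_iff (le_trans dist_nonneg (le_max_left _ _))).2
    intro j
    have hxy : dist (x j) (y j) ≤ dist x y := dist_le_pi_dist x y j
    have hyz : dist (y j) (z j) ≤ dist y z := dist_le_pi_dist y z j
    have hxyj : dist (x j) (y j) = ρ * ((|a j - e j| : ℤ) : ℝ) := by
      rw [Real.dist_eq, ha, he, ← mul_sub, abs_mul, abs_of_pos hρ]
      congr 1; push_cast; ring_nf
    have hyzj : dist (y j) (z j) = ρ * ((|a j + n j - e j| : ℤ) : ℝ) := by
      rw [Real.dist_eq, hb, he, ← mul_sub, abs_mul, abs_of_pos hρ]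
      congr 1
      rw [abs_sub_comm]
      push_cast [hn]; ring_nf
    have hpyj : dist (p ℓ j) (y j) = ρ * ((|a j + c ℓ j - e j| : ℤ) : ℝ) := by
      rw [hp]
      simp only
      rw [Real.dist_eq, he, ← mul_sub, abs_mul, abs_of_pos hρ]
      congr 1; push_cast; ring_nf
    have hkey : |a j + c ℓ j - e j| ≤ max (|a j - e j|) (|a j + n j - e j|) :=
      int_clamp_between (ℓ : ℤ) (n j) (a j) (e j) (Int.ofNat_nonneg ℓ)
    rw [hpyj]
    rcases le_max_iff.1 hkey with h | h
    · refine le_trans ?_ (le_max_left (dist x y) (dist y z))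
      refine le_trans ?_ hxy
      rw [hxyj]
      have h' : ((|a j + c ℓ j - e j| : ℤ) : ℝ) ≤ ((|a j - e j| : ℤ) : ℝ) := by exact_mod_cast h
      nlinarith
    · refine le_trans ?_ (le_max_right (dist x y) (dist y z))
      refine le_trans ?_ hyz
      rw [hyzj]
      have h' : ((|a j + c ℓ j - e j| : ℤ) : ℝ) ≤ ((|a j + n j - e j| : ℤ) : ℝ) := by exact_mod_cast h
      nlinarith
end
end

section
/- Let m ≥ 1, let ρ > 0, and let M ⊆ Δ_ρ with ∅ ≠ M ≠ Δ_ρ. If x ∈ M and z ∈ M^c ∩ Δ_ρ satisfy ‖z−x‖_∞ = dist(z, M), then x ∈ ∂^0_ρ M, and there exists y ∈ ∂^1_ρ M with ‖y − x‖_∞ = ρ and ‖z − y‖_∞ = ‖z − x‖_∞ − ρ. -/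
noncomputable section

/-- `∂⁰_ρ M`: points of `M` having a grid neighbour in the complement at distance `ρ`. -/
def bdry0 (m : ℕ) (ρ : ℝ) (M : Set (Fin m → ℝ)) : Set (Fin m → ℝ) :=
  {x | x ∈ M ∧ ∃ z ∈ Mᶜ ∩ grid m ρ, dist x z = ρ}

/-- `∂¹_ρ M`: grid points of the complement at distance `ρ` from `∂⁰_ρ M`. -/
def bdry1 (m : ℕ) (ρ : ℝ) (M : Set (Fin m → ℝ)) : Set (Fin m → ℝ) :=
  {z | z ∈ Mᶜ ∩ grid m ρ ∧ Metric.infDist z (bdry0 m ρ M) = ρ}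

/-- Two distinct grid points are at distance at least `ρ`. -/
lemma grid_sep {m : ℕ} {ρ : ℝ} (hρ : 0 < ρ) {a b : Fin m → ℝ}
    (ha : a ∈ grid m ρ) (hb : b ∈ grid m ρ) (hab : a ≠ b) : ρ ≤ dist a b := by
  obtain ⟨j, hj⟩ := Function.ne_iff.mp hab
  obtain ⟨k, hk⟩ := ha j
  obtain ⟨l, hl⟩ := hb j
  have hkl : k ≠ l := by rintro rfl; exact hj (hk.trans hl.symm)
  have h1 : ρ ≤ dist (a j) (b j) := by
    rw [Real.dist_eq, hk, hl, ← mul_sub, abs_mul, abs_of_pos hρ]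
    have h2 : (1:ℝ) ≤ |((k:ℝ) - l)| := by
      have := Int.one_le_abs (sub_ne_zero.mpr hkl)
      have : ((1:ℤ):ℝ) ≤ ((|k - l|:ℤ):ℝ) := by exact_mod_cast this
      simpa [abs_sub_comm] using this
    nlinarith
  exact h1.trans (dist_le_pi_dist a b j)

lemma grid_coord_zero {ρ : ℝ} (hρ : 0 < ρ) {t : ℝ} (ht : ∃ n : ℤ, t = ρ * n)
    (h : |t| < ρ) : t = 0 := by
  obtain ⟨n, rfl⟩ := ht
  rcases eq_or_ne n 0 with rfl | hn
  · simp
  · exfalso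
    have h1 : (1:ℝ) ≤ |(n:ℝ)| := by
      have := Int.one_le_abs hn
      have : ((1:ℤ):ℝ) ≤ ((|n|:ℤ):ℝ) := by exact_mod_cast this
      simpa using this
    rw [abs_mul, abs_of_pos hρ] at h
    nlinarith

theorem stmt1 (m : ℕ) (hm : 1 ≤ m) (ρ : ℝ) (hρ : 0 < ρ)
    (M : Set (Fin m → ℝ)) (hM : M ⊆ grid m ρ) (hne : M.Nonempty) (hneq : M ≠ grid m ρ)
    (x : Fin m → ℝ) (hx : x ∈ M)
    (z : Fin m → ℝ) (hz : z ∈ Mᶜ ∩ grid m ρ)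
    (hd : dist z x = Metric.infDist z M) :
    x ∈ bdry0 m ρ M ∧
      ∃ y ∈ bdry1 m ρ M, dist y x = ρ ∧ dist z y = dist z x - ρ := by
  set d := dist z x with hdd
  have hzM : z ∉ M := hz.1
  have hzg : z ∈ grid m ρ := hz.2
  have hxg : x ∈ grid m ρ := hM hx
  have hzx : z ≠ x := fun h => hzM (h ▸ hx)
  have hdρ : ρ ≤ d := grid_sep hρ hzg hxg hzx
  have hdiff : ∀ j, ∃ n : ℤ, z j - x j = ρ * n := by
    intro j
    obtain ⟨k, hk⟩ := hzg j; obtain ⟨l, hl⟩ := hxg j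
    exact ⟨k - l, by rw [hk, hl]; push_cast; ring⟩
  set step : Fin m → ℝ := fun j =>
    if ρ ≤ z j - x j then ρ else if z j - x j ≤ -ρ then -ρ else 0 with hstep
  set y : Fin m → ℝ := fun j => x j + step j with hy
  have hcoord_le : ∀ j, |z j - x j| ≤ d := by
    intro j
    have := dist_le_pi_dist z x j
    rwa [Real.dist_eq] at this
  -- per coordinate bounds
  have key : ∀ j, |step j| ≤ ρ ∧ |z j - x j - step j| ≤ d - ρ := by
    intro j
    have ht := hcoord_le j
    have htle : z j - x j ≤ |z j - x j| := le_abs_self _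
    have htge : -(z j - x j) ≤ |z j - x j| := neg_le_abs _
    by_cases h1 : ρ ≤ z j - x j
    · simp only [hstep, if_pos h1]
      refine ⟨by rw [abs_of_pos hρ], ?_⟩
      rw [abs_of_nonneg (by linarith)]
      linarith
    · by_cases h2 : z j - x j ≤ -ρ
      · simp only [hstep, if_neg h1, if_pos h2]
        refine ⟨by rw [abs_neg, abs_of_pos hρ], ?_⟩
        rw [abs_of_nonpos (by linarith)]
        linarith
      · have habs : |z j - x j| < ρ := abs_lt.mpr ⟨by linarith [not_le.mp h2], not_le.mp h1⟩
        have ht0 : z j - x j = 0 := grid_coord_zero hρ (hdiff j) habs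
        simp only [hstep, if_neg h1, if_neg h2]
        constructor
        · simpa using le_of_lt hρ
        · rw [ht0]; simpa using by linarith
  -- index attaining the max
  have hmne : (Finset.univ : Finset (Fin m)).Nonempty := by
    have : Nonempty (Fin m) := ⟨⟨0, hm⟩⟩
    exact Finset.univ_nonempty
  obtain ⟨j0, -, hj0⟩ := Finset.exists_mem_eq_sup Finset.univ hmne
    (fun j => nndist (z j) (x j))
  have hdj0' : d = dist (z j0) (x j0) := by
    rw [hdd, dist_pi_def, hj0, coe_nndist]
  have hdj0 : |z j0 - x j0| = d := by
    rw [← Real.dist_eq, ← hdj0']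
  have key0 : |step j0| = ρ ∧ |z j0 - x j0 - step j0| = d - ρ := by
    by_cases h1 : ρ ≤ z j0 - x j0
    · simp only [hstep, if_pos h1]
      have habs : z j0 - x j0 = d := by
        rw [← hdj0, abs_of_nonneg (by linarith)]
      exact ⟨abs_of_pos hρ, by rw [abs_of_nonneg (by linarith), habs]⟩
    · have h2 : z j0 - x j0 ≤ -ρ := by
        rcases abs_cases (z j0 - x j0) with ⟨h, _⟩ | ⟨h, _⟩
        · exfalso; apply h1; rw [h] at hdj0; linarith
        · rw [h] at hdj0; linarith
      simp only [hstep, if_neg h1, if_pos h2]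
      constructor
      · rw [abs_neg, abs_of_pos hρ]
      · have hneg : -(z j0 - x j0) = d := by
          rw [← hdj0, abs_of_nonpos (by linarith)]
        rw [abs_of_nonpos (by linarith)]
        linarith
  -- distances to y
  have hyx : dist y x = ρ := by
    apply le_antisymm
    · rw [dist_pi_le_iff (le_of_lt hρ)]
      intro j
      have : y j - x j = step j := by simp [hy]
      rw [Real.dist_eq, this]
      exact (key j).1
    · calc ρ = dist (y j0) (x j0) := by
            rw [Real.dist_eq]
            have : y j0 - x j0 = step j0 := by simp [hy]
            rw [this, key0.1]
        _ ≤ dist y x := dist_le_pi_dist y x j0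
  have hzyd : dist z y = d - ρ := by
    apply le_antisymm
    · rw [dist_pi_le_iff (by linarith)]
      intro j
      have : z j - y j = z j - x j - step j := by simp [hy]; ring
      rw [Real.dist_eq, this]
      exact (key j).2
    · calc d - ρ = dist (z j0) (y j0) := by
            rw [Real.dist_eq]
            have : z j0 - y j0 = z j0 - x j0 - step j0 := by simp [hy]; ring
            rw [this, key0.2]
        _ ≤ dist z y := dist_le_pi_dist z y j0
  -- y is a grid point
  have hyg : y ∈ grid m ρ := by
    intro j
    obtain ⟨l, hl⟩ := hxg j
    simp only [hy, hstep]
    split_ifs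
    · exact ⟨l + 1, by rw [hl]; push_cast; ring⟩
    · exact ⟨l - 1, by rw [hl]; push_cast; ring⟩
    · exact ⟨l, by rw [hl]; ring⟩
  -- y is not in M
  have hyM : y ∉ M := by
    intro hyM
    have h1 : Metric.infDist z M ≤ dist z y := Metric.infDist_le_dist_of_mem hyM
    rw [← hd, hzyd] at h1
    linarith
  have hxb : x ∈ bdry0 m ρ M := ⟨hx, y, ⟨hyM, hyg⟩, by rw [dist_comm]; exact hyx⟩
  have hyb : y ∈ bdry1 m ρ M := by
    refine ⟨⟨hyM, hyg⟩, le_antisymm ?_ ?_⟩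
    · have := Metric.infDist_le_dist_of_mem (x := y) hxb
      rwa [hyx] at this
    · by_contra hlt
      push_neg at hlt
      obtain ⟨w, hw, hwlt⟩ := (Metric.infDist_lt_iff ⟨x, hxb⟩).mp hlt
      have hwM : w ∈ M := hw.1
      have hyw : y ≠ w := fun h => hyM (h ▸ hwM)
      have := grid_sep hρ hyg (hM hwM) hyw
      linarith
  exact ⟨hxb, y, hyb, hyx, by rw [hzyd]⟩
end
end

section
/- Let m ≥ 1, let ρ > 0, and let M ⊆ Δ_ρ with ∅ ≠ M ≠ Δ_ρ. Then: (i) for every x ∈ M, dist(x, M^c ∩ Δ_ρ) = dist(x, ∂^1_ρ M); (ii) for every z ∈ M^c ∩ Δ_ρ, dist(z, M) = dist(z, ∂^0_ρ M); (iii) for every x ∈ Δ_ρ, x ∈ M if and only if dist(x, ∂^0_ρ M) < dist(x, ∂^1_ρ M); (iv) for every z ∈ Δ_ρ, z ∈ M^c ∩ Δ_ρ if and only if dist(z, ∂^1_ρ M) < dist(z, ∂^0_ρ M). -/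
noncomputable section

/-!
Moving every coordinate of a grid point `x ≠ z` by `ρ` towards the corresponding coordinate of the
grid point `z` (or not at all where they agree) gives a grid neighbour `y` of `x` with
`dist y z + ρ ≤ dist x z`. Iterating from `x ∈ M` towards `z ∉ M`, the path leaves `M` through a
pair `a ∈ ∂⁰_ρ M`, `b ∈ ∂¹_ρ M` at distance `ρ` with `dist x a + ρ + dist b z ≤ dist x z`.
Grid points are `ρ`-separated, so sets of grid points are closed and nearest points exist; placing
such a pair between a point and its nearest point on the other side of `M` gives all four claims.
-/

open Metric

variable {m : ℕ} {ρ : ℝ}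

lemma dist_mul_intCast (hρ : 0 ≤ ρ) (a b : ℤ) :
    dist (ρ * a) (ρ * b) = ρ * ((|a - b| : ℤ) : ℝ) := by
  rw [Real.dist_eq, ← mul_sub, abs_mul, abs_of_nonneg hρ]
  push_cast
  rfl

lemma exists_grid_step (hρ : 0 < ρ) {x z : Fin m → ℝ} (hx : x ∈ grid m ρ)
    (hz : z ∈ grid m ρ) (hxz : x ≠ z) :
    ∃ y ∈ grid m ρ, dist x y = ρ ∧ dist y z + ρ ≤ dist x z := by
  choose a ha using hx
  choose b hb using hz
  obtain ⟨j₀, hj₀⟩ := Function.ne_iff.1 hxz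
  have hab₀ : a j₀ ≠ b j₀ := fun h => hj₀ (by rw [ha, hb, h])
  have hcoord : ∀ j, dist (x j) (z j) = ρ * ((|a j - b j| : ℤ) : ℝ) := fun j => by
    rw [ha, hb, dist_mul_intCast hρ.le]
  have hρ_le : ρ ≤ dist x z := by
    have h1 : (1 : ℝ) ≤ ((|a j₀ - b j₀| : ℤ) : ℝ) := by
      exact_mod_cast Int.one_le_abs (sub_ne_zero.2 hab₀)
    calc ρ ≤ ρ * ((|a j₀ - b j₀| : ℤ) : ℝ) := le_mul_of_one_le_right hρ.le h1
      _ = dist (x j₀) (z j₀) := (hcoord j₀).symm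
      _ ≤ dist x z := dist_le_pi_dist x z j₀
  set c : Fin m → ℤ := fun j => max (a j - 1) (min (a j + 1) (b j))
  refine ⟨fun j => ρ * c j, fun j => ⟨c j, rfl⟩, le_antisymm ?_ ?_, ?_⟩
  · refine (dist_pi_le_iff hρ.le).2 fun j => ?_
    have hstep : |a j - c j| ≤ 1 := by simp only [c, abs_eq_max_neg]; omega
    rw [ha, dist_mul_intCast hρ.le]
    exact mul_le_of_le_one_right hρ.le (by exact_mod_cast hstep)
  · have hstep : |a j₀ - c j₀| = 1 := by simp only [c, abs_eq_max_neg]; omega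
    calc ρ = dist (x j₀) (ρ * c j₀) := by rw [ha, dist_mul_intCast hρ.le, hstep]; simp
      _ ≤ _ := dist_le_pi_dist x (fun j => ρ * c j) j₀
  · rw [← le_sub_iff_add_le]
    refine (dist_pi_le_iff (sub_nonneg.2 hρ_le)).2 fun j => ?_
    rw [le_sub_iff_add_le, hb, dist_mul_intCast hρ.le]
    by_cases hab : a j = b j
    · have hcb : c j = b j := by simp only [c]; omega
      simpa [hcb] using hρ_le
    · have hstep : |c j - b j| + 1 = |a j - b j| := by simp only [c, abs_eq_max_neg]; omega
      calc ρ * ((|c j - b j| : ℤ) : ℝ) + ρ = ρ * ((|a j - b j| : ℤ) : ℝ) := by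
            rw [← hstep]; push_cast; ring
        _ = dist (x j) (z j) := (hcoord j).symm
        _ ≤ dist x z := dist_le_pi_dist x z j

lemma le_dist_of_mem_grid (hρ : 0 < ρ) {x z : Fin m → ℝ} (hx : x ∈ grid m ρ)
    (hz : z ∈ grid m ρ) (hxz : x ≠ z) : ρ ≤ dist x z := by
  obtain ⟨y, -, -, hyz⟩ := exists_grid_step hρ hx hz hxz
  linarith [dist_nonneg (x := y) (y := z)]

lemma isClosed_of_subset_grid (hρ : 0 < ρ) {S : Set (Fin m → ℝ)} (hS : S ⊆ grid m ρ) :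
    IsClosed S :=
  isClosed_of_pairwise_le_dist hρ fun _ hx _ hy hxy => le_dist_of_mem_grid hρ (hS hx) (hS hy) hxy

lemma exists_adjacent_between (hρ : 0 < ρ) {M : Set (Fin m → ℝ)} {x z : Fin m → ℝ}
    (hx : x ∈ M) (hxg : x ∈ grid m ρ) (hz : z ∈ Mᶜ ∩ grid m ρ) :
    ∃ a ∈ M, ∃ b ∈ Mᶜ ∩ grid m ρ, dist a b = ρ ∧ dist x a + ρ + dist b z ≤ dist x z := by
  obtain ⟨n, hn⟩ := exists_nat_ge (dist x z / ρ)
  rw [div_le_iff₀ hρ, mul_comm] at hn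
  induction n generalizing x with
  | zero =>
    have hxz : x = z := dist_le_zero.1 (by simpa using hn)
    exact absurd (hxz ▸ hx) hz.1
  | succ n ih =>
    obtain ⟨y, hyg, hxy, hyz⟩ := exists_grid_step hρ hxg hz.2 fun h => hz.1 (h ▸ hx)
    by_cases hyM : y ∈ M
    · obtain ⟨a, ha, b, hb, hab, h⟩ := ih hyM hyg (by push_cast at hn; linarith)
      refine ⟨a, ha, b, hb, hab, ?_⟩
      linarith [dist_triangle x y a]
    · exact ⟨x, hx, y, ⟨hyM, hyg⟩, hxy, by rw [dist_self]; linarith⟩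

lemma mem_bdry1_of_dist_eq (hρ : 0 < ρ) {M : Set (Fin m → ℝ)} (hM : M ⊆ grid m ρ)
    {a b : Fin m → ℝ} (ha : a ∈ bdry0 m ρ M) (hb : b ∈ Mᶜ ∩ grid m ρ) (hab : dist a b = ρ) :
    b ∈ bdry1 m ρ M := by
  refine ⟨hb, le_antisymm ?_ ((le_infDist ⟨a, ha⟩).2 fun a' ha' => ?_)⟩
  · exact (infDist_le_dist_of_mem ha).trans_eq (by rw [dist_comm, hab])
  · exact le_dist_of_mem_grid hρ hb.2 (hM ha'.1) fun h => hb.1 (h ▸ ha'.1)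

lemma exists_bdry0_bdry1_between (hρ : 0 < ρ) {M : Set (Fin m → ℝ)} (hM : M ⊆ grid m ρ)
    {x z : Fin m → ℝ} (hx : x ∈ M) (hz : z ∈ Mᶜ ∩ grid m ρ) :
    ∃ a ∈ bdry0 m ρ M, ∃ b ∈ bdry1 m ρ M, dist a b = ρ ∧ dist x a + ρ + dist b z ≤ dist x z := by
  obtain ⟨a, haM, b, hb, hab, h⟩ := exists_adjacent_between hρ hx (hM hx) hz
  have ha : a ∈ bdry0 m ρ M := ⟨haM, b, hb, hab⟩
  exact ⟨a, ha, b, mem_bdry1_of_dist_eq hρ hM ha hb hab, hab, h⟩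

section Boundary

variable (hρ : 0 < ρ) {M : Set (Fin m → ℝ)} (hM : M ⊆ grid m ρ)
include hρ hM

lemma infDist_inter_grid_eq_infDist_bdry1 (hC : (Mᶜ ∩ grid m ρ).Nonempty) {x : Fin m → ℝ}
    (hx : x ∈ M) : infDist x (Mᶜ ∩ grid m ρ) = infDist x (bdry1 m ρ M) := by
  obtain ⟨z, hz, hxz⟩ :=
    (isClosed_of_subset_grid hρ Set.inter_subset_right).exists_infDist_eq_dist hC x
  obtain ⟨a, -, b, hb, hab, h⟩ := exists_bdry0_bdry1_between hρ hM hx hz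
  refine le_antisymm (infDist_le_infDist_of_subset (fun _ hw => hw.1) ⟨b, hb⟩) ?_
  linarith [infDist_le_dist_of_mem (x := x) hb, dist_triangle x a b, dist_nonneg (x := b) (y := z)]

lemma infDist_bdry0_lt_infDist_bdry1 (hC : (Mᶜ ∩ grid m ρ).Nonempty) {x : Fin m → ℝ}
    (hx : x ∈ M) : infDist x (bdry0 m ρ M) < infDist x (bdry1 m ρ M) := by
  rw [← infDist_inter_grid_eq_infDist_bdry1 hρ hM hC hx]
  obtain ⟨z, hz, hxz⟩ :=
    (isClosed_of_subset_grid hρ Set.inter_subset_right).exists_infDist_eq_dist hC x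
  obtain ⟨a, ha, b, -, -, h⟩ := exists_bdry0_bdry1_between hρ hM hx hz
  linarith [infDist_le_dist_of_mem (x := x) ha, dist_nonneg (x := b) (y := z)]

lemma infDist_eq_infDist_bdry0 (hne : M.Nonempty) {z : Fin m → ℝ} (hz : z ∈ Mᶜ ∩ grid m ρ) :
    infDist z M = infDist z (bdry0 m ρ M) := by
  obtain ⟨x, hx, hzx⟩ := (isClosed_of_subset_grid hρ hM).exists_infDist_eq_dist hne z
  obtain ⟨a, ha, b, -, hab, h⟩ := exists_bdry0_bdry1_between hρ hM hx hz
  refine le_antisymm (infDist_le_infDist_of_subset (fun _ hw => hw.1) ⟨a, ha⟩) ?_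
  linarith [infDist_le_dist_of_mem (x := z) ha, dist_triangle z b a, dist_comm z x, dist_comm a b,
    dist_comm z b, dist_nonneg (x := x) (y := a)]

lemma infDist_bdry1_lt_infDist_bdry0 (hne : M.Nonempty) {z : Fin m → ℝ}
    (hz : z ∈ Mᶜ ∩ grid m ρ) : infDist z (bdry1 m ρ M) < infDist z (bdry0 m ρ M) := by
  rw [← infDist_eq_infDist_bdry0 hρ hM hne hz]
  obtain ⟨x, hx, hzx⟩ := (isClosed_of_subset_grid hρ hM).exists_infDist_eq_dist hne z
  obtain ⟨a, -, b, hb, -, h⟩ := exists_bdry0_bdry1_between hρ hM hx hz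
  linarith [infDist_le_dist_of_mem (x := z) hb, dist_comm z x, dist_comm z b,
    dist_nonneg (x := x) (y := a)]

end Boundary

theorem stmt4_general (m : ℕ) (ρ : ℝ) (hρ : 0 < ρ)
    (M : Set (Fin m → ℝ)) (hM : M ⊆ grid m ρ) (hne : M.Nonempty) (hneq : M ≠ grid m ρ) :
    (∀ x ∈ M, Metric.infDist x (Mᶜ ∩ grid m ρ) = Metric.infDist x (bdry1 m ρ M)) ∧
    (∀ z ∈ Mᶜ ∩ grid m ρ, Metric.infDist z M = Metric.infDist z (bdry0 m ρ M)) ∧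
    (∀ x ∈ grid m ρ,
      (x ∈ M ↔ Metric.infDist x (bdry0 m ρ M) < Metric.infDist x (bdry1 m ρ M))) ∧
    (∀ z ∈ grid m ρ,
      (z ∈ Mᶜ ∩ grid m ρ ↔
        Metric.infDist z (bdry1 m ρ M) < Metric.infDist z (bdry0 m ρ M))) := by
  obtain ⟨w, hwg, hwM⟩ := Set.exists_of_ssubset (hM.ssubset_of_ne hneq)
  have hC : (Mᶜ ∩ grid m ρ).Nonempty := ⟨w, hwM, hwg⟩
  have lt01 := fun x => infDist_bdry0_lt_infDist_bdry1 (x := x) hρ hM hC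
  have lt10 := fun z => infDist_bdry1_lt_infDist_bdry0 (z := z) hρ hM hne
  refine ⟨fun x => infDist_inter_grid_eq_infDist_bdry1 hρ hM hC,
    fun z => infDist_eq_infDist_bdry0 hρ hM hne, fun x hx => ⟨lt01 x, fun h => ?_⟩,
    fun z hz => ⟨lt10 z, fun h => ⟨fun hzM => (lt01 z hzM).asymm h, hz⟩⟩⟩
  by_contra hxM
  exact (lt10 x ⟨hxM, hx⟩).asymm h

theorem stmt4 (m : ℕ) (hm : 1 ≤ m) (ρ : ℝ) (hρ : 0 < ρ)
    (M : Set (Fin m → ℝ)) (hM : M ⊆ grid m ρ) (hne : M.Nonempty) (hneq : M ≠ grid m ρ) :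
    (∀ x ∈ M, Metric.infDist x (Mᶜ ∩ grid m ρ) = Metric.infDist x (bdry1 m ρ M)) ∧
    (∀ z ∈ Mᶜ ∩ grid m ρ, Metric.infDist z M = Metric.infDist z (bdry0 m ρ M)) ∧
    (∀ x ∈ grid m ρ,
      (x ∈ M ↔ Metric.infDist x (bdry0 m ρ M) < Metric.infDist x (bdry1 m ρ M))) ∧
    (∀ z ∈ grid m ρ,
      (z ∈ Mᶜ ∩ grid m ρ ↔
        Metric.infDist z (bdry1 m ρ M) < Metric.infDist z (bdry0 m ρ M))) :=
  stmt4_general m ρ hρ M hM hne hneq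
end
end

section
/- Let m ≥ 1, let ρ > 0, and let M ⊆ Δ_ρ with ∅ ≠ M ≠ Δ_ρ. Then for every integer k ∈ ℤ, ∂^k_ρ M = ∂^{1−k}_ρ(M^c ∩ Δ_ρ). -/
noncomputable section

/-- The boundary layer `∂ᵏ_ρ M` for `k : ℤ`: for `k ≥ 1` it consists of the grid points of
`Mᶜ` at distance `kρ` from `∂⁰_ρ M`, for `k = 0` it is `∂⁰_ρ M`, and for `k ≤ -1` it
consists of the points of `M` at distance `(-k)ρ` from `∂⁰_ρ M`. -/
def bdryZ (m : ℕ) (ρ : ℝ) (k : ℤ) (M : Set (Fin m → ℝ)) : Set (Fin m → ℝ) :=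
  if 1 ≤ k then {z | z ∈ Mᶜ ∩ grid m ρ ∧ Metric.infDist z (bdry0 m ρ M) = (k : ℝ) * ρ}
  else if k = 0 then bdry0 m ρ M
  else {x | x ∈ M ∧ Metric.infDist x (bdry0 m ρ M) = (-k : ℝ) * ρ}

namespace Stmt5Aux

/-- The "inner boundary" of `A` relative to `B`. -/
def Ebd (m : ℕ) (ρ : ℝ) (A B : Set (Fin m → ℝ)) : Set (Fin m → ℝ) :=
  {x | x ∈ A ∧ ∃ z ∈ B, dist x z = ρ}

lemma bdry0_eq (m : ℕ) (ρ : ℝ) (M : Set (Fin m → ℝ)) :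
    bdry0 m ρ M = Ebd m ρ M (Mᶜ ∩ grid m ρ) := rfl

lemma le_infDist' {α : Type*} [MetricSpace α] {s : Set α} (hs : s.Nonempty) {x : α} {b : ℝ}
    (H : ∀ y ∈ s, b ≤ dist x y) : b ≤ Metric.infDist x s := by
  by_contra h
  push_neg at h
  obtain ⟨y, hy, hlt⟩ := (Metric.infDist_lt_iff hs).1 h
  exact absurd hlt (not_lt.2 (H y hy))

variable {m : ℕ} {ρ : ℝ}

lemma coord_dist {x y : Fin m → ℝ} {a b : Fin m → ℤ}
    (ha : ∀ j, x j = ρ * a j) (hb : ∀ j, y j = ρ * b j) (hρ : 0 < ρ) (j : Fin m) :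
    dist (x j) (y j) = ((a j - b j).natAbs : ℝ) * ρ := by
  rw [Real.dist_eq, ha, hb, ← mul_sub]
  rw [abs_mul, abs_of_pos hρ]
  push_cast [Nat.cast_natAbs]
  ring

lemma exists_nat_dist (hm : 1 ≤ m) (hρ : 0 < ρ) {x y : Fin m → ℝ}
    (hx : x ∈ grid m ρ) (hy : y ∈ grid m ρ) : ∃ n : ℕ, dist x y = n * ρ := by
  obtain ⟨a, ha⟩ : ∃ a : Fin m → ℤ, ∀ j, x j = ρ * a j :=
    ⟨fun j => (hx j).choose, fun j => (hx j).choose_spec⟩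
  obtain ⟨b, hb⟩ : ∃ b : Fin m → ℤ, ∀ j, y j = ρ * b j :=
    ⟨fun j => (hy j).choose, fun j => (hy j).choose_spec⟩
  have : Nonempty (Fin m) := ⟨⟨0, hm⟩⟩
  set f : Fin m → ℕ := fun j => (a j - b j).natAbs with hf
  obtain ⟨j0, _, hj0⟩ := Finset.exists_mem_eq_sup (α := ℕ) Finset.univ Finset.univ_nonempty f
  refine ⟨Finset.univ.sup f, le_antisymm ?_ ?_⟩
  · refine (dist_pi_le_iff (by positivity)).2 fun j => ?_
    rw [coord_dist ha hb hρ j]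
    have : f j ≤ Finset.univ.sup f := Finset.le_sup (Finset.mem_univ j)
    exact mul_le_mul_of_nonneg_right (by exact_mod_cast this) hρ.le
  · calc ((Finset.univ.sup f : ℕ) : ℝ) * ρ = dist (x j0) (y j0) := by
          rw [coord_dist ha hb hρ j0, hj0]
        _ ≤ dist x y := dist_le_pi_dist x y j0

lemma rho_le_dist (hm : 1 ≤ m) (hρ : 0 < ρ) {x y : Fin m → ℝ}
    (hx : x ∈ grid m ρ) (hy : y ∈ grid m ρ) (hne : x ≠ y) : ρ ≤ dist x y := by
  obtain ⟨n, hn⟩ := exists_nat_dist hm hρ hx hy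
  have hn0 : n ≠ 0 := by
    rintro rfl
    simp at hn
    exact hne hn
  calc ρ = 1 * ρ := (one_mul ρ).symm
    _ ≤ n * ρ := by
        have : (1:ℝ) ≤ n := by exact_mod_cast Nat.one_le_iff_ne_zero.mpr hn0
        exact mul_le_mul_of_nonneg_right this hρ.le
    _ = dist x y := hn.symm

lemma step (hρ : 0 < ρ) {x z : Fin m → ℝ}
    (hx : x ∈ grid m ρ) (hz : z ∈ grid m ρ) {n : ℕ}
    (hd : dist x z = (n + 1) * ρ) :
    ∃ w ∈ grid m ρ, dist x w = n * ρ ∧ dist w z = ρ := by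
  obtain ⟨a, ha⟩ : ∃ a : Fin m → ℤ, ∀ j, x j = ρ * a j :=
    ⟨fun j => (hx j).choose, fun j => (hx j).choose_spec⟩
  obtain ⟨b, hb⟩ : ∃ b : Fin m → ℤ, ∀ j, z j = ρ * b j :=
    ⟨fun j => (hz j).choose, fun j => (hz j).choose_spec⟩
  set c : Fin m → ℤ := fun j =>
    if 0 < a j - b j then 1 else if a j - b j < 0 then -1 else 0 with hc
  set w : Fin m → ℝ := fun j => ρ * (b j + c j) with hw
  have hwg : w ∈ grid m ρ := fun j => ⟨b j + c j, by push_cast [hw]; ring⟩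
  have hwdef : ∀ j, w j = ρ * ((b j + c j : ℤ) : ℝ) := fun j => by push_cast [hw]; ring
  have habs : ∀ j, ((a j - b j).natAbs : ℤ) ≤ (n : ℤ) + 1 := by
    intro j
    have h1 : dist (x j) (z j) ≤ dist x z := dist_le_pi_dist x z j
    rw [coord_dist ha hb hρ j, hd] at h1
    have h2 : ((a j - b j).natAbs : ℝ) ≤ (n : ℝ) + 1 :=
      le_of_mul_le_mul_right (by linarith) hρ
    exact_mod_cast h2
  -- dist w z ≤ ρ
  have hwz : dist w z ≤ ρ := by
    refine (dist_pi_le_iff hρ.le).2 fun j => ?_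
    rw [coord_dist hwdef hb hρ j]
    have : (((b j + c j) - b j).natAbs : ℤ) ≤ 1 := by
      simp only [hc]; split_ifs <;> simp
    have h1 : (((b j + c j) - b j).natAbs : ℝ) ≤ 1 := by exact_mod_cast this
    nlinarith
  -- dist x w ≤ n ρ
  have hxw : dist x w ≤ n * ρ := by
    refine (dist_pi_le_iff (by positivity)).2 fun j => ?_
    rw [coord_dist ha hwdef hρ j]
    have habsj := habs j
    have : ((a j - (b j + c j)).natAbs : ℤ) ≤ (n : ℤ) := by
      simp only [hc] at *
      split_ifs with h1 h2 <;> omega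
    have h1 : ((a j - (b j + c j)).natAbs : ℝ) ≤ (n : ℝ) := by exact_mod_cast this
    exact mul_le_mul_of_nonneg_right h1 hρ.le
  have htri : dist x z ≤ dist x w + dist w z := dist_triangle x w z
  have h1 : dist w z = ρ := by rw [hd] at htri; linarith
  have h2 : dist x w = n * ρ := by
    have : dist x z ≤ dist x w + dist w z := htri
    have h3 : dist x w ≥ dist x z - dist w z := by linarith
    rw [hd, h1] at h3
    linarith
  exact ⟨w, hwg, h2, h1⟩

lemma attain (hm : 1 ≤ m) (hρ : 0 < ρ) {x : Fin m → ℝ} {S : Set (Fin m → ℝ)}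
    (hx : x ∈ grid m ρ) (hS : S ⊆ grid m ρ) (hSne : S.Nonempty) :
    ∃ s ∈ S, ∃ n : ℕ, dist x s = n * ρ ∧ Metric.infDist x S = n * ρ := by
  set T : Set ℕ := {n : ℕ | ∃ s ∈ S, dist x s = n * ρ} with hT
  have hTne : T.Nonempty := by
    obtain ⟨s, hs⟩ := hSne
    obtain ⟨n, hn⟩ := exists_nat_dist hm hρ hx (hS hs)
    exact ⟨n, s, hs, hn⟩
  obtain ⟨s, hsS, hsd⟩ := Nat.sInf_mem hTne
  refine ⟨s, hsS, sInf T, hsd, le_antisymm ?_ ?_⟩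
  · exact hsd ▸ Metric.infDist_le_dist_of_mem hsS
  · refine le_infDist' hSne fun y hy => ?_
    obtain ⟨n, hn⟩ := exists_nat_dist hm hρ hx (hS hy)
    have : sInf T ≤ n := Nat.sInf_le ⟨y, hy, hn⟩
    rw [hn]
    exact mul_le_mul_of_nonneg_right (by exact_mod_cast this) hρ.le

section Pair

variable (hm : 1 ≤ m) (hρ : 0 < ρ) {A B : Set (Fin m → ℝ)}
  (hA : A ⊆ grid m ρ) (hB : B ⊆ grid m ρ)
  (hd : ∀ x, x ∈ A → x ∉ B) (hu : ∀ x ∈ grid m ρ, x ∈ A ∨ x ∈ B)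

include hm hρ hA hB hd hu

/-- For `x ∈ A`, dist to the inner boundary of `A` is dist to `B` minus `ρ`. -/
lemma infDist_Ebd_self {x : Fin m → ℝ} (hxA : x ∈ A) (hBne : B.Nonempty) :
    Metric.infDist x (Ebd m ρ A B) = Metric.infDist x B - ρ := by
  obtain ⟨s, hsB, n, hds, hinf⟩ := attain hm hρ (hA hxA) hB hBne
  have hn1 : 1 ≤ n := by
    have := rho_le_dist hm hρ (hA hxA) (hB hsB)
      (fun h => hd x hxA (h ▸ hsB))
    rw [hds] at this
    by_contra h
    push_neg at h
    interval_cases n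
    · simp at this; linarith
  obtain ⟨nn, rfl⟩ : ∃ nn, n = nn + 1 := ⟨n - 1, by omega⟩
  obtain ⟨w, hwg, hxw, hws⟩ := step hρ (hA hxA) (hB hsB) (by exact_mod_cast hds)
  have hwA : w ∈ A := by
    rcases hu w hwg with h | h
    · exact h
    · exfalso
      have h1 : Metric.infDist x B ≤ dist x w := Metric.infDist_le_dist_of_mem h
      rw [hinf, hxw] at h1
      push_cast at h1
      nlinarith
  have hwE : w ∈ Ebd m ρ A B := ⟨hwA, s, hsB, hws⟩
  have hEne : (Ebd m ρ A B).Nonempty := ⟨w, hwE⟩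
  refine le_antisymm ?_ ?_
  · calc Metric.infDist x (Ebd m ρ A B) ≤ dist x w := Metric.infDist_le_dist_of_mem hwE
      _ = Metric.infDist x B - ρ := by rw [hxw, hinf]; push_cast; ring
  · refine le_infDist' hEne fun y hy => ?_
    obtain ⟨hyA, z', hz'B, hyz'⟩ := hy
    have h1 : Metric.infDist x B ≤ dist x z' := Metric.infDist_le_dist_of_mem hz'B
    have h2 : dist x z' ≤ dist x y + dist y z' := dist_triangle x y z'
    rw [hyz'] at h2
    linarith

/-- For `z ∈ B`, dist to the inner boundary of `A` equals dist to `A`. -/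
lemma infDist_Ebd_other {z : Fin m → ℝ} (hzB : z ∈ B) (hAne : A.Nonempty) :
    Metric.infDist z (Ebd m ρ A B) = Metric.infDist z A := by
  obtain ⟨s, hsA, n, hds, hinf⟩ := attain hm hρ (hB hzB) hA hAne
  have hn1 : 1 ≤ n := by
    have := rho_le_dist hm hρ (hB hzB) (hA hsA)
      (fun h => hd s hsA (h ▸ hzB))
    rw [hds] at this
    by_contra h
    push_neg at h
    interval_cases n
    · simp at this; linarith
  obtain ⟨nn, rfl⟩ : ∃ nn, n = nn + 1 := ⟨n - 1, by omega⟩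
  obtain ⟨w, hwg, hzw, hws⟩ := step hρ (hB hzB) (hA hsA) (by exact_mod_cast hds)
  have hwB : w ∈ B := by
    rcases hu w hwg with h | h
    · exfalso
      have h1 : Metric.infDist z A ≤ dist z w := Metric.infDist_le_dist_of_mem h
      rw [hinf, hzw] at h1
      push_cast at h1
      nlinarith
    · exact h
  have hsE : s ∈ Ebd m ρ A B := ⟨hsA, w, hwB, by rw [dist_comm]; exact hws⟩
  refine le_antisymm ?_ ?_
  · calc Metric.infDist z (Ebd m ρ A B) ≤ dist z s := Metric.infDist_le_dist_of_mem hsE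
      _ = Metric.infDist z A := by rw [hds, hinf]
  · exact Metric.infDist_le_infDist_of_subset (fun y hy => hy.1) ⟨s, hsE⟩

omit hu in
lemma infDist_eq_rho_iff {z : Fin m → ℝ} (hzB : z ∈ B) (hAne : A.Nonempty) :
    Metric.infDist z A = ρ ↔ ∃ x ∈ A, dist z x = ρ := by
  constructor
  · intro h
    obtain ⟨s, hsA, n, hds, hinf⟩ := attain hm hρ (hB hzB) hA hAne
    exact ⟨s, hsA, by rw [hds, ← hinf, h]⟩
  · rintro ⟨x, hxA, hdx⟩
    refine le_antisymm (hdx ▸ Metric.infDist_le_dist_of_mem hxA) ?_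
    refine le_infDist' hAne fun y hy => ?_
    exact rho_le_dist hm hρ (hB hzB) (hA hy) (fun h => hd y hy (h ▸ hzB))

end Pair

lemma key (m : ℕ) (hm : 1 ≤ m) (ρ : ℝ) (hρ : 0 < ρ)
    (M : Set (Fin m → ℝ)) (hM : M ⊆ grid m ρ) (hne : M.Nonempty) (hneq : M ≠ grid m ρ)
    (k : ℤ) (hk : 1 ≤ k) :
    bdryZ m ρ k M = bdryZ m ρ (1 - k) (Mᶜ ∩ grid m ρ) := by
  set N : Set (Fin m → ℝ) := Mᶜ ∩ grid m ρ with hN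
  have hNg : N ⊆ grid m ρ := fun x hx => hx.2
  have hNne : N.Nonempty := by
    obtain ⟨x, hxg, hxM⟩ := Set.exists_of_ssubset (hM.ssubset_of_ne hneq)
    exact ⟨x, hxM, hxg⟩
  have hNcap : Nᶜ ∩ grid m ρ = M := by
    ext x
    simp only [hN, Set.mem_inter_iff, Set.mem_compl_iff, not_and_or, not_not]
    constructor
    · rintro ⟨h | h, hg⟩
      · exact h
      · exact absurd hg h
    · intro h
      exact ⟨Or.inl h, hM h⟩
  have hd : ∀ x, x ∈ M → x ∉ N := fun x hx hxN => hxN.1 hx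
  have hu : ∀ x ∈ grid m ρ, x ∈ M ∨ x ∈ N := fun x hx => by
    by_cases h : x ∈ M
    · exact Or.inl h
    · exact Or.inr ⟨h, hx⟩
  have hd' : ∀ x, x ∈ N → x ∉ M := fun x hx hxM => hx.1 hxM
  have hu' : ∀ x ∈ grid m ρ, x ∈ N ∨ x ∈ M := fun x hx => (hu x hx).symm
  have hb0M : bdry0 m ρ M = Ebd m ρ M N := rfl
  have hb0N : bdry0 m ρ N = Ebd m ρ N M := by
    rw [bdry0_eq, hNcap]
  rcases eq_or_lt_of_le hk with hk1 | hk2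
  · -- k = 1
    subst hk1
    rw [show (1 - 1 : ℤ) = 0 by ring]
    rw [bdryZ, if_pos le_rfl, bdryZ, if_neg (by omega), if_pos rfl]
    ext z
    simp only [Set.mem_setOf_eq, ← hN]
    rw [hb0N]
    constructor
    · rintro ⟨hzN, hdz⟩
      rw [hb0M, infDist_Ebd_other hm hρ hM hNg hd hu hzN hne] at hdz
      norm_num at hdz
      exact ⟨hzN, (infDist_eq_rho_iff hm hρ hM hNg hd hzN hne).1 hdz⟩
    · rintro ⟨hzN, hex⟩
      have h1 : Metric.infDist z M = ρ :=
        (infDist_eq_rho_iff hm hρ hM hNg hd hzN hne).2 hex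
      refine ⟨hzN, ?_⟩
      rw [hb0M, infDist_Ebd_other hm hρ hM hNg hd hu hzN hne, h1]
      norm_num
  · -- k ≥ 2
    rw [bdryZ, if_pos hk, bdryZ, if_neg (by omega), if_neg (by omega)]
    ext z
    simp only [Set.mem_setOf_eq, ← hN]
    constructor
    · rintro ⟨hzN, hdz⟩
      rw [hb0M, infDist_Ebd_other hm hρ hM hNg hd hu hzN hne] at hdz
      refine ⟨hzN, ?_⟩
      rw [hb0N, infDist_Ebd_self hm hρ hNg hM hd' hu' hzN hne, hdz]
      push_cast; ring
    · rintro ⟨hzN, hdz⟩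
      rw [hb0N, infDist_Ebd_self hm hρ hNg hM hd' hu' hzN hne] at hdz
      refine ⟨hzN, ?_⟩
      rw [hb0M, infDist_Ebd_other hm hρ hM hNg hd hu hzN hne]
      push_cast at hdz ⊢
      linarith

end Stmt5Aux

open Stmt5Aux in
theorem stmt5 (m : ℕ) (hm : 1 ≤ m) (ρ : ℝ) (hρ : 0 < ρ)
    (M : Set (Fin m → ℝ)) (hM : M ⊆ grid m ρ) (hne : M.Nonempty) (hneq : M ≠ grid m ρ) :
    ∀ k : ℤ, bdryZ m ρ k M = bdryZ m ρ (1 - k) (Mᶜ ∩ grid m ρ) := by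
  intro k
  rcases le_or_gt 1 k with hk | hk
  · exact key m hm ρ hρ M hM hne hneq k hk
  · set N : Set (Fin m → ℝ) := Mᶜ ∩ grid m ρ with hNdef
    have hNg : N ⊆ grid m ρ := fun x hx => hx.2
    have hNne : N.Nonempty := by
      obtain ⟨x, hxg, hxM⟩ := Set.exists_of_ssubset (hM.ssubset_of_ne hneq)
      exact ⟨x, hxM, hxg⟩
    have hNneq : N ≠ grid m ρ := by
      obtain ⟨x, hxM⟩ := hne
      intro h
      have : x ∈ N := h ▸ hM hxM
      exact this.1 hxM
    have hNcap : Nᶜ ∩ grid m ρ = M := by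
      ext x
      simp only [hNdef, Set.mem_inter_iff, Set.mem_compl_iff, not_and_or, not_not]
      constructor
      · rintro ⟨h | h, hg⟩
        · exact h
        · exact absurd hg h
      · intro h
        exact ⟨Or.inl h, hM h⟩
    have h1k : 1 ≤ 1 - k := by omega
    have hkey := key m hm ρ hρ N hNg hNne hNneq (1 - k) h1k
    rw [hNcap, show (1 - (1 - k) : ℤ) = k by ring] at hkey
    exact hkey.symm
end
end

section
/- Let m ≥ 1 and ρ > 0, and let (D_0, D_1) be a pair of subsets of Δ_ρ satisfying the five boundary-pair axioms. Define M := M(D_0, D_1) := {x ∈ Δ_ρ : dist(x, D_0) < dist(x, D_1)}. Then ∂^0_ρ M = D_0 and ∂^1_ρ M = D_1. -/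
noncomputable section

/-- The five boundary-pair axioms for a pair `(D0, D1)` of subsets of the grid `Δ_ρ`. -/
def BoundaryPair (m : ℕ) (ρ : ℝ) (D0 D1 : Set (Fin m → ℝ)) : Prop :=
  D0 ⊆ grid m ρ ∧ D1 ⊆ grid m ρ ∧
  D0 ≠ ∅ ∧ D1 ≠ ∅ ∧ D0 ∩ D1 = ∅ ∧
  (∀ x ∈ D0, ∃ z ∈ D1, dist x z = ρ) ∧
  (∀ z ∈ D1, ∃ x ∈ D0, dist x z = ρ) ∧
  (∀ x ∈ D0, ∀ z ∈ D1, ∀ (k : ℕ) (p : ℕ → Fin m → ℝ), IsPath m ρ x z k p → 1 < k →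
    ∃ ℓ, 0 < ℓ ∧ ℓ < k ∧ p ℓ ∈ D0 ∪ D1)

/-- `M(D0, D1)`: the grid points strictly closer to `D0` than to `D1`. -/
def Mset (m : ℕ) (ρ : ℝ) (D0 D1 : Set (Fin m → ℝ)) : Set (Fin m → ℝ) :=
  {x | x ∈ grid m ρ ∧ Metric.infDist x D0 < Metric.infDist x D1}


section Aux
open Metric


-- real clamp
def clamp (t d : ℝ) : ℝ := max (-t) (min t d)

lemma clamp_zero (d : ℝ) : clamp 0 d = 0 := by
  unfold clamp
  rw [neg_zero]
  rcases le_total d 0 with h|h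
  · rw [min_eq_right h, max_eq_left h]
  · rw [min_eq_left h, max_eq_left le_rfl]

lemma neg_le_clamp (t d : ℝ) : -t ≤ clamp t d := le_max_left _ _

lemma clamp_le (t d : ℝ) (ht : 0 ≤ t) : clamp t d ≤ t :=
  max_le (by linarith) (min_le_left _ _)

lemma abs_clamp_le (t d : ℝ) (ht : 0 ≤ t) : |clamp t d| ≤ t :=
  abs_le.2 ⟨neg_le_clamp t d, clamp_le t d ht⟩

lemma clamp_eq_self (t d : ℝ) (h : |d| ≤ t) : clamp t d = d := by
  rw [abs_le] at h
  unfold clamp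
  rw [min_eq_right h.2, max_eq_right h.1]

lemma abs_sub_clamp_le (t s d : ℝ) (ht : 0 ≤ t) (hts : t ≤ s) (hd : |d| ≤ s) :
    |d - clamp t d| ≤ s - t := by
  rw [abs_le] at hd ⊢
  unfold clamp
  rcases le_total d (-t) with h|h
  · rw [min_eq_right (by linarith), max_eq_left (by linarith)]
    constructor <;> linarith
  · rcases le_total t d with h2|h2
    · rw [min_eq_left h2, max_eq_right (by linarith)]
      constructor <;> linarith
    · rw [min_eq_right h2, max_eq_right h]
      constructor <;> linarith

lemma abs_clamp_sub_clamp_le (t1 t2 d : ℝ) (h0 : 0 ≤ t1) (h12 : t1 ≤ t2) :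
    |clamp t2 d - clamp t1 d| ≤ t2 - t1 := by
  unfold clamp
  rw [abs_le]
  rcases le_total d (-t2) with h|h
  · rw [min_eq_right (by linarith), max_eq_left (by linarith),
      min_eq_right (by linarith), max_eq_left (by linarith)]
    constructor <;> linarith
  · rcases le_total d (-t1) with h1|h1
    · rw [min_eq_right (show d ≤ t2 by linarith), max_eq_right h,
        min_eq_right (show d ≤ t1 by linarith), max_eq_left h1]
      constructor <;> linarith
    · rcases le_total t2 d with h2|h2
      · rw [min_eq_left h2, min_eq_left (by linarith), max_eq_right (by linarith),
          max_eq_right (by linarith)]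
        constructor <;> linarith
      · rcases le_total t1 d with h3|h3
        · rw [min_eq_right h2, min_eq_left h3, max_eq_right (by linarith),
            max_eq_right (by linarith)]
          constructor <;> linarith
        · rw [min_eq_right h2, min_eq_right h3, max_eq_right h, max_eq_right h1]
          constructor <;> linarith

lemma clamp_mul (ρ t d : ℝ) (hρ : 0 < ρ) : clamp (ρ * t) (ρ * d) = ρ * clamp t d := by
  unfold clamp
  rw [mul_max_of_nonneg _ _ hρ.le, mul_min_of_nonneg _ _ hρ.le, mul_neg]

variable {m : ℕ} {ρ : ℝ}

lemma grid_dist_nat (hm : 1 ≤ m) (hρ : 0 < ρ) {x y : Fin m → ℝ}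
    (hx : x ∈ grid m ρ) (hy : y ∈ grid m ρ) : ∃ n : ℕ, dist x y = ρ * n := by
  have hne : (Finset.univ : Finset (Fin m)).Nonempty := by
    simpa [Finset.univ_nonempty_iff] using Fin.pos_iff_nonempty.mp hm
  obtain ⟨j, -, hj⟩ := Finset.exists_mem_eq_sup Finset.univ hne
    (fun i => nndist (x i) (y i))
  obtain ⟨a, ha⟩ := hx j
  obtain ⟨b, hb⟩ := hy j
  refine ⟨(a - b).natAbs, ?_⟩
  have : dist x y = dist (x j) (y j) := by
    rw [dist_nndist, nndist_pi_def, hj, ← dist_nndist]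
  rw [this, Real.dist_eq, ha, hb, ← mul_sub, abs_mul, abs_of_pos hρ, ← Int.cast_sub,
    Nat.cast_natAbs]
  push_cast
  ring

lemma infDist_grid_attained (hm : 1 ≤ m) (hρ : 0 < ρ) {x : Fin m → ℝ} {S : Set (Fin m → ℝ)}
    (hx : x ∈ grid m ρ) (hS : S ⊆ grid m ρ) (hSne : S.Nonempty) :
    ∃ (n : ℕ) (a : Fin m → ℝ), a ∈ S ∧ dist x a = ρ * n ∧ Metric.infDist x S = ρ * n := by
  have hT : ∃ n : ℕ, ∃ a ∈ S, dist x a = ρ * n := by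
    obtain ⟨a, ha⟩ := hSne
    obtain ⟨n, hn⟩ := grid_dist_nat hm hρ hx (hS ha)
    exact ⟨n, a, ha, hn⟩
  classical
  let n0 := Nat.find hT
  obtain ⟨a, ha, hda⟩ := Nat.find_spec hT
  refine ⟨n0, a, ha, hda, le_antisymm ?_ ?_⟩
  · calc Metric.infDist x S ≤ dist x a := Metric.infDist_le_dist_of_mem ha
    _ = ρ * n0 := hda
  · by_contra hlt
    push_neg at hlt
    obtain ⟨b, hb, hdb⟩ := (Metric.infDist_lt_iff hSne).1 hlt
    obtain ⟨nb, hnb⟩ := grid_dist_nat hm hρ hx (hS hb)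
    have : nb < n0 := by
      have : ρ * nb < ρ * n0 := by rw [← hnb]; exact hdb
      exact_mod_cast lt_of_mul_lt_mul_left this hρ.le
    exact Nat.find_min hT this ⟨b, hb, hnb⟩

lemma rho_le_infDist (hm : 1 ≤ m) (hρ : 0 < ρ) {x : Fin m → ℝ} {S : Set (Fin m → ℝ)}
    (hx : x ∈ grid m ρ) (hxS : x ∉ S) (hS : S ⊆ grid m ρ) (hSne : S.Nonempty) :
    ρ ≤ Metric.infDist x S := by
  obtain ⟨n, a, ha, hda, hinf⟩ := infDist_grid_attained hm hρ hx hS hSne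
  rw [hinf]
  have hn : n ≠ 0 := by
    rintro rfl
    apply hxS
    have : dist x a = 0 := by simpa using hda
    rwa [dist_eq_zero.mp this]
  calc ρ = ρ * 1 := (mul_one ρ).symm
  _ ≤ ρ * n := by
      have : (1 : ℝ) ≤ n := by exact_mod_cast Nat.one_le_iff_ne_zero.2 hn
      nlinarith

def geo (ρ : ℝ) (x y : Fin m → ℝ) (ℓ : ℕ) : Fin m → ℝ :=
  fun j => x j + clamp (ρ * ℓ) (y j - x j)

lemma geodesic (hρ : 0 < ρ) {x y : Fin m → ℝ} (hx : x ∈ grid m ρ) (hy : y ∈ grid m ρ)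
    {n : ℕ} (hdist : dist x y = ρ * n) :
    IsPath m ρ x y n (geo ρ x y) ∧
      ∀ ℓ ≤ n, dist (geo ρ x y ℓ) x ≤ ρ * ℓ ∧ dist (geo ρ x y ℓ) y ≤ ρ * ((n : ℝ) - ℓ) := by
  have hcoord : ∀ j, |y j - x j| ≤ ρ * n := by
    intro j
    calc |y j - x j| = dist (y j) (x j) := (Real.dist_eq _ _).symm
    _ ≤ dist y x := dist_le_pi_dist y x j
    _ = ρ * n := by rw [dist_comm]; exact hdist
  have hstepbd : ∀ ℓ : ℕ, 1 ≤ ℓ → dist (geo ρ x y ℓ) (geo ρ x y (ℓ - 1)) ≤ ρ := by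
    intro ℓ hℓ
    rw [dist_pi_le_iff hρ.le]
    intro j
    rw [Real.dist_eq]
    have : geo ρ x y ℓ j - geo ρ x y (ℓ - 1) j
        = clamp (ρ * ℓ) (y j - x j) - clamp (ρ * (ℓ - 1 : ℕ)) (y j - x j) := by
      unfold geo; ring
    rw [this]
    have hc : ((ℓ - 1 : ℕ) : ℝ) = (ℓ : ℝ) - 1 := by
      rw [Nat.cast_sub hℓ]; norm_num
    have h0 : (0:ℝ) ≤ ρ * ((ℓ:ℝ) - 1) := by
      have : (1:ℝ) ≤ ℓ := by exact_mod_cast hℓ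
      nlinarith
    have h12 : ρ * ((ℓ:ℝ) - 1) ≤ ρ * ℓ := by nlinarith
    calc |clamp (ρ * ℓ) (y j - x j) - clamp (ρ * (ℓ - 1 : ℕ)) (y j - x j)|
        = |clamp (ρ * ℓ) (y j - x j) - clamp (ρ * ((ℓ:ℝ) - 1)) (y j - x j)| := by rw [hc]
    _ ≤ ρ * ℓ - ρ * ((ℓ:ℝ) - 1) := abs_clamp_sub_clamp_le _ _ _ h0 h12
    _ = ρ := by ring
  have hgrid : ∀ ℓ : ℕ, geo ρ x y ℓ ∈ grid m ρ := by
    intro ℓ j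
    obtain ⟨a, ha⟩ := hx j
    obtain ⟨b, hb⟩ := hy j
    refine ⟨a + max (-(ℓ:ℤ)) (min (ℓ:ℤ) (b - a)), ?_⟩
    have hd : y j - ρ * (a:ℝ) = ρ * ((b - a : ℤ) : ℝ) := by rw [hb]; push_cast; ring
    have : geo ρ x y ℓ j = ρ * a + ρ * clamp ((ℓ:ℤ):ℝ) (((b - a : ℤ)) : ℝ) := by
      unfold geo
      rw [ha, hd]
      congr 1
      rw [← clamp_mul ρ _ _ hρ]
      norm_num
    rw [this]
    have : clamp ((ℓ:ℤ):ℝ) (((b - a : ℤ)) : ℝ) = ((max (-(ℓ:ℤ)) (min (ℓ:ℤ) (b - a)) : ℤ) : ℝ) := by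
      unfold clamp; push_cast; ring
    rw [this]
    push_cast
    ring
  have hd0 : ∀ ℓ : ℕ, dist (geo ρ x y ℓ) x ≤ ρ * ℓ := by
    intro ℓ
    have h0 : (0:ℝ) ≤ ρ * ℓ := by positivity
    rw [dist_pi_le_iff h0]
    intro j
    rw [Real.dist_eq]
    have : geo ρ x y ℓ j - x j = clamp (ρ * ℓ) (y j - x j) := by unfold geo; ring
    rw [this]
    exact abs_clamp_le _ _ h0
  have hd1 : ∀ ℓ : ℕ, ℓ ≤ n → dist (geo ρ x y ℓ) y ≤ ρ * ((n : ℝ) - ℓ) := by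
    intro ℓ hℓ
    have hℓr : (ℓ : ℝ) ≤ n := by exact_mod_cast hℓ
    have h0 : (0:ℝ) ≤ ρ * ((n:ℝ) - ℓ) := by nlinarith
    rw [dist_pi_le_iff h0]
    intro j
    rw [Real.dist_eq]
    have heq : geo ρ x y ℓ j - y j = -((y j - x j) - clamp (ρ * ℓ) (y j - x j)) := by
      unfold geo; ring
    rw [heq, abs_neg]
    have := abs_sub_clamp_le (ρ * ℓ) (ρ * n) (y j - x j) (by positivity)
      (by nlinarith) (hcoord j)
    calc |(y j - x j) - clamp (ρ * ℓ) (y j - x j)| ≤ ρ * n - ρ * ℓ := this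
    _ = ρ * ((n:ℝ) - ℓ) := by ring
  have hend : geo ρ x y n = y := by
    funext j
    have : |y j - x j| ≤ ρ * n := hcoord j
    unfold geo
    rw [clamp_eq_self _ _ this]
    ring
  have hstart : geo ρ x y 0 = x := by
    funext j
    unfold geo
    norm_num [clamp_zero]
  exact ⟨⟨hstart, hend, fun ℓ _ => hgrid ℓ, fun ℓ h1 _ => hstepbd ℓ h1⟩,
    fun ℓ hℓ => ⟨hd0 ℓ, hd1 ℓ hℓ⟩⟩

def pconcat (k1 : ℕ) (p q : ℕ → Fin m → ℝ) : ℕ → Fin m → ℝ :=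
  fun ℓ => if ℓ ≤ k1 then p ℓ else q (ℓ - k1)

lemma pconcat_le {k1 ℓ : ℕ} (p q : ℕ → Fin m → ℝ) (h : ℓ ≤ k1) :
    pconcat k1 p q ℓ = p ℓ := if_pos h

lemma pconcat_ge {k1 ℓ : ℕ} {p q : ℕ → Fin m → ℝ} (hq0 : q 0 = p k1) (h : k1 ≤ ℓ) :
    pconcat k1 p q ℓ = q (ℓ - k1) := by
  unfold pconcat
  split_ifs with h'
  · have : ℓ = k1 := le_antisymm h' h
    subst this
    simp [hq0]
  · rfl

lemma IsPath.concat {x y z : Fin m → ℝ} {k1 k2 : ℕ} {p q : ℕ → Fin m → ℝ}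
    (hp : IsPath m ρ x y k1 p) (hq : IsPath m ρ y z k2 q) :
    IsPath m ρ x z (k1 + k2) (pconcat k1 p q) := by
  obtain ⟨hp0, hp1, hpg, hps⟩ := hp
  obtain ⟨hq0, hq1, hqg, hqs⟩ := hq
  have hmid : q 0 = p k1 := by rw [hq0, hp1]
  refine ⟨?_, ?_, ?_, ?_⟩
  · rw [pconcat_le p q (Nat.zero_le k1), hp0]
  · rw [pconcat_ge hmid (Nat.le_add_right k1 k2), Nat.add_sub_cancel_left, hq1]
  · intro ℓ hℓ
    by_cases h : ℓ ≤ k1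
    · rw [pconcat_le p q h]; exact hpg ℓ h
    · rw [pconcat_ge hmid (le_of_not_ge h)]
      exact hqg _ (by omega)
  · intro ℓ h1 h2
    by_cases h : ℓ ≤ k1
    · rw [pconcat_le p q h, pconcat_le p q (by omega)]
      exact hps ℓ h1 h
    · rw [pconcat_ge hmid (by omega), pconcat_ge hmid (by omega)]
      have : ℓ - 1 - k1 = (ℓ - k1) - 1 := by omega
      rw [this]
      exact hqs (ℓ - k1) (by omega) (by omega)

lemma step_path (hρ : 0 < ρ) {x z : Fin m → ℝ} (hx : x ∈ grid m ρ) (hz : z ∈ grid m ρ)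
    (h : dist x z ≤ ρ) : IsPath m ρ x z 1 (fun ℓ => if ℓ = 0 then x else z) := by
  refine ⟨by norm_num, by norm_num, ?_, ?_⟩
  · intro ℓ _
    by_cases hℓ : ℓ = 0 <;> simp [hℓ, hx, hz]
  · intro ℓ h1 h2
    have : ℓ = 1 := le_antisymm h2 h1
    subst this
    simpa [dist_comm] using h

lemma infDist_le_infDist_add_rho (hm : 1 ≤ m) (hρ : 0 < ρ) {S T : Set (Fin m → ℝ)}
    (hS : S ⊆ grid m ρ) (hSne : S.Nonempty)
    (hstep : ∀ x ∈ S, ∃ z ∈ T, dist x z = ρ) :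
    ∀ x ∈ grid m ρ, Metric.infDist x T ≤ Metric.infDist x S + ρ := by
  have P : ∀ n : ℕ, ∀ x ∈ grid m ρ, Metric.infDist x S ≤ ρ * n →
      Metric.infDist x T ≤ ρ * n + ρ := by
    intro n
    induction n with
    | zero =>
      intro x hx h0
      obtain ⟨n', a, haS, hda, hinf⟩ := infDist_grid_attained hm hρ hx hS hSne
      have hn0 : n' = 0 := by
        by_contra hc
        have h1 : (1:ℝ) ≤ (n':ℝ) := by exact_mod_cast Nat.one_le_iff_ne_zero.2 hc
        rw [hinf] at h0
        push_cast at h0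
        nlinarith
      have hxa : x = a := by
        apply dist_eq_zero.mp
        rw [hda, hn0]; norm_num
      obtain ⟨z, hz, hdz⟩ := hstep x (hxa ▸ haS)
      calc Metric.infDist x T ≤ dist x z := Metric.infDist_le_dist_of_mem hz
      _ = ρ := hdz
      _ ≤ ρ * ((0:ℕ):ℝ) + ρ := by push_cast; nlinarith
    | succ n ih =>
      intro x hx h
      obtain ⟨n', a, haS, hda, hinf⟩ := infDist_grid_attained hm hρ hx hS hSne
      by_cases hle : n' ≤ n
      · have h1 : Metric.infDist x S ≤ ρ * n := by
          rw [hinf]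
          have : (n' : ℝ) ≤ n := by exact_mod_cast hle
          nlinarith
        have := ih x hx h1
        have hn : (n : ℝ) ≤ (n + 1 : ℕ) := by push_cast; linarith
        push_cast
        nlinarith [ih x hx h1]
      · have hge : n + 1 ≤ n' := by omega
        have hle' : (n' : ℝ) ≤ (n : ℝ) + 1 := by
          by_contra hc
          push_neg at hc
          rw [hinf] at h
          push_cast at h
          nlinarith
        have hn' : n' = n + 1 := by
          have : (n':ℝ) ≥ (n:ℝ) + 1 := by exact_mod_cast hge
          have : n' ≤ n + 1 := by exact_mod_cast hle'
          omega
        subst hn'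
        obtain ⟨hpath, hbd⟩ := geodesic hρ hx (hS haS) hda
        set y := geo ρ x a 1 with hy
        have hyg : y ∈ grid m ρ := hpath.2.2.1 1 (by omega)
        have hbd1 := hbd 1 (by omega)
        have hya : dist y a ≤ ρ * n := by
          have := hbd1.2
          push_cast at this ⊢
          calc dist y a ≤ ρ * (((n:ℝ) + 1) - 1) := this
          _ = ρ * n := by ring
        have hxy : dist x y ≤ ρ := by
          rw [dist_comm]
          calc dist y x ≤ ρ * (1:ℕ) := hbd1.1
          _ = ρ := by norm_num
        have hIy : Metric.infDist y S ≤ ρ * n :=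
          le_trans (Metric.infDist_le_dist_of_mem haS) hya
        have := ih y hyg hIy
        calc Metric.infDist x T ≤ Metric.infDist y T + dist x y :=
              Metric.infDist_le_infDist_add_dist
        _ ≤ (ρ * n + ρ) + ρ := by linarith
        _ = ρ * (n + 1 : ℕ) + ρ := by push_cast; ring
  intro x hx
  obtain ⟨n, a, haS, hda, hinf⟩ := infDist_grid_attained hm hρ hx hS hSne
  rw [hinf]
  exact P n x hx (le_of_eq hinf)

lemma nat_le_of_rho_le (hρ : 0 < ρ) {a b : ℕ} (h : ρ * a ≤ ρ * b) : a ≤ b := by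
  have : (a : ℝ) ≤ b := le_of_mul_le_mul_left h hρ
  exact_mod_cast this

lemma nat_lt_of_rho_lt (hρ : 0 < ρ) {a b : ℕ} (h : ρ * a < ρ * b) : a < b := by
  have : (a : ℝ) < b := lt_of_mul_lt_mul_left h hρ.le
  exact_mod_cast this

lemma mem_D0_of_bdry (hm : 1 ≤ m) (hρ : 0 < ρ) {D0 D1 : Set (Fin m → ℝ)}
    (hD : BoundaryPair m ρ D0 D1) {x z : Fin m → ℝ}
    (hx : x ∈ grid m ρ) (hz : z ∈ grid m ρ) (hxz : dist x z = ρ)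
    (hxM : Metric.infDist x D0 < Metric.infDist x D1)
    (hzM : ¬ Metric.infDist z D0 < Metric.infDist z D1) : x ∈ D0 := by
  obtain ⟨hD0g, hD1g, hD0ne, hD1ne, hdisj, hax3, hax4, hax5⟩ := hD
  have hD0n : D0.Nonempty := Set.nonempty_iff_ne_empty.2 hD0ne
  have hD1n : D1.Nonempty := Set.nonempty_iff_ne_empty.2 hD1ne
  by_contra hxD0
  obtain ⟨n, a, haD0, hda, hinf0⟩ := infDist_grid_attained hm hρ hx hD0g hD0n
  obtain ⟨n1, b1, hb1D1, hdb1, hinf1⟩ := infDist_grid_attained hm hρ hx hD1g hD1n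
  obtain ⟨n0z, az, hazD0, hdaz, hinf0z⟩ := infDist_grid_attained hm hρ hz hD0g hD0n
  obtain ⟨n1z, b, hbD1, hdb, hinf1z⟩ := infDist_grid_attained hm hρ hz hD1g hD1n
  -- basic numeric facts
  have hn1 : 1 ≤ n := by
    have : ρ ≤ Metric.infDist x D0 := rho_le_infDist hm hρ hx hxD0 hD0g hD0n
    rw [hinf0] at this
    exact nat_le_of_rho_le hρ (by push_cast; linarith [this])
  have hnn1 : n < n1 := nat_lt_of_rho_lt hρ (by rw [← hinf0, ← hinf1]; exact hxM)
  have hzle : n1z ≤ n0z := by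
    apply nat_le_of_rho_le hρ
    rw [← hinf0z, ← hinf1z]
    exact not_lt.mp hzM
  have hnn1z : n ≤ n1z := by
    have h1 : Metric.infDist x D1 ≤ Metric.infDist z D1 + dist x z :=
      Metric.infDist_le_infDist_add_dist
    rw [hinf1, hinf1z, hxz] at h1
    have hc1 : ((n:ℝ) + 1) ≤ n1 := by exact_mod_cast hnn1
    apply nat_le_of_rho_le hρ
    nlinarith
  have hn1z1 : 1 ≤ n1z := le_trans hn1 hnn1z
  have hzD0 : z ∉ D0 := by
    intro hc
    have h0 : Metric.infDist z D0 = 0 := Metric.infDist_zero_of_mem hc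
    rw [hinf0z] at h0
    have h2 : (1:ℝ) ≤ n0z := by exact_mod_cast le_trans hn1z1 hzle
    nlinarith
  have hzD1 : z ∉ D1 := by
    intro hc
    have h0 : Metric.infDist z D1 = 0 := Metric.infDist_zero_of_mem hc
    rw [hinf1z] at h0
    have h2 : (1:ℝ) ≤ n1z := by exact_mod_cast hn1z1
    nlinarith
  -- build the path
  have hdax : dist a x = ρ * n := by rw [dist_comm]; exact hda
  obtain ⟨hp1, hbd1⟩ := geodesic hρ (hD0g haD0) hx hdax
  have hs : IsPath m ρ x z 1 (fun ℓ => if ℓ = 0 then x else z) :=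
    step_path hρ hx hz (le_of_eq hxz)
  obtain ⟨hp2, hbd2⟩ := geodesic hρ hz (hD1g hbD1) hdb
  have hpath1 : IsPath m ρ a z (n + 1) (pconcat n (geo ρ a x) (fun ℓ => if ℓ = 0 then x else z)) :=
    hp1.concat hs
  have hpath : IsPath m ρ a b ((n + 1) + n1z)
      (pconcat (n+1) (pconcat n (geo ρ a x) (fun ℓ => if ℓ = 0 then x else z)) (geo ρ z b)) :=
    hpath1.concat hp2
  obtain ⟨ℓ, hl0, hlk, hmem⟩ := hax5 a haD0 b hbD1 _ _ hpath (by omega)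
  set inner := pconcat n (geo ρ a x) (fun ℓ => if ℓ = 0 then x else z) with hinner
  have hinner_end : inner (n+1) = z := hpath1.2.1
  have hmid : geo ρ z b 0 = inner (n+1) := by rw [hinner_end, hp2.1]
  rcases le_or_gt ℓ n with hcase | hcase
  · -- on the first geodesic segment
    have hPl : pconcat (n+1) inner (geo ρ z b) ℓ = geo ρ a x ℓ := by
      rw [pconcat_le _ _ (by omega : ℓ ≤ n + 1), hinner, pconcat_le _ _ hcase]
    rw [hPl] at hmem
    have hqx : dist (geo ρ a x ℓ) x ≤ ρ * ((n:ℝ) - ℓ) := (hbd1 ℓ hcase).2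
    have hl1 : (1:ℝ) ≤ (ℓ:ℝ) := by exact_mod_cast hl0
    rcases hmem with hq | hq
    · have h1 : Metric.infDist x D0 ≤ dist x (geo ρ a x ℓ) := Metric.infDist_le_dist_of_mem hq
      rw [dist_comm] at h1
      rw [hinf0] at h1
      nlinarith
    · have h1 : Metric.infDist x D1 ≤ dist x (geo ρ a x ℓ) := Metric.infDist_le_dist_of_mem hq
      rw [dist_comm] at h1
      rw [hinf1] at h1
      have hc1 : ((n:ℝ) + 1) ≤ n1 := by exact_mod_cast hnn1
      nlinarith
  · rcases eq_or_lt_of_le (Nat.succ_le_of_lt hcase) with hcase2 | hcase2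
    · -- the middle point z
      have hPl : pconcat (n+1) inner (geo ρ z b) ℓ = z := by
        rw [pconcat_le _ _ (le_of_eq hcase2.symm), ← hcase2, hinner_end]
      rw [hPl] at hmem
      rcases hmem with hq | hq
      · exact hzD0 hq
      · exact hzD1 hq
    · -- on the second geodesic segment
      have hPl : pconcat (n+1) inner (geo ρ z b) ℓ = geo ρ z b (ℓ - (n+1)) :=
        pconcat_ge hmid (by omega)
      rw [hPl] at hmem
      set j := ℓ - (n+1) with hj
      have hj1 : 1 ≤ j := by omega
      have hjlt : j < n1z := by omega
      have hqz : dist (geo ρ z b j) z ≤ ρ * (j:ℕ) := (hbd2 j (by omega)).1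
      have hjr : (j:ℝ) + 1 ≤ n1z := by exact_mod_cast hjlt
      have hjr' : (j:ℝ) ≤ (n1z:ℝ) - 1 := by linarith
      have e1 : ρ * ((j:ℝ) + 1) ≤ ρ * n1z := mul_le_mul_of_nonneg_left hjr hρ.le
      rcases hmem with hq | hq
      · have h1 : Metric.infDist z D0 ≤ dist z (geo ρ z b j) := Metric.infDist_le_dist_of_mem hq
        rw [dist_comm] at h1
        rw [hinf0z] at h1
        have hzler : (n1z:ℝ) ≤ n0z := by exact_mod_cast hzle
        have e2 : ρ * (n1z:ℝ) ≤ ρ * n0z := mul_le_mul_of_nonneg_left hzler hρ.le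
        linarith only [h1, hqz, e1, e2, hρ]
      · have h1 : Metric.infDist z D1 ≤ dist z (geo ρ z b j) := Metric.infDist_le_dist_of_mem hq
        rw [dist_comm] at h1
        rw [hinf1z] at h1
        linarith only [h1, hqz, e1, hρ]


end Aux

theorem stmt10 (m : ℕ) (hm : 1 ≤ m) (ρ : ℝ) (hρ : 0 < ρ)
    (D0 D1 : Set (Fin m → ℝ)) (hD : BoundaryPair m ρ D0 D1) :
    bdry0 m ρ (Mset m ρ D0 D1) = D0 ∧ bdry1 m ρ (Mset m ρ D0 D1) = D1 := by
  obtain ⟨hD0g, hD1g, hD0ne, hD1ne, hdisj, hax3, hax4, hax5⟩ := hD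
  have hD0n : D0.Nonempty := Set.nonempty_iff_ne_empty.2 hD0ne
  have hD1n : D1.Nonempty := Set.nonempty_iff_ne_empty.2 hD1ne
  have hnotD1 : ∀ x ∈ D0, x ∉ D1 := fun x hx0 h1 =>
    (Set.eq_empty_iff_forall_notMem.mp hdisj x ⟨hx0, h1⟩)
  have hnotD0 : ∀ z ∈ D1, z ∉ D0 := fun z hz1 h0 =>
    (Set.eq_empty_iff_forall_notMem.mp hdisj z ⟨h0, hz1⟩)
  -- D0 ⊆ M
  have hD0M : ∀ x ∈ D0, x ∈ Mset m ρ D0 D1 := by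
    intro x hx0
    refine ⟨hD0g hx0, ?_⟩
    rw [Metric.infDist_zero_of_mem hx0]
    calc (0:ℝ) < ρ := hρ
    _ ≤ Metric.infDist x D1 := rho_le_infDist hm hρ (hD0g hx0) (hnotD1 x hx0) hD1g hD1n
  -- D1 ∩ M = ∅
  have hD1M : ∀ z ∈ D1, z ∉ Mset m ρ D0 D1 := by
    intro z hz1 hzM
    have h1 : Metric.infDist z D1 = 0 := Metric.infDist_zero_of_mem hz1
    have := hzM.2
    rw [h1] at this
    exact absurd this (not_lt.2 Metric.infDist_nonneg)
  have hb0 : bdry0 m ρ (Mset m ρ D0 D1) = D0 := by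
    apply Set.eq_of_subset_of_subset
    · rintro x ⟨hxM, z, ⟨hzMc, hzg⟩, hdxz⟩
      have hzM : ¬ Metric.infDist z D0 < Metric.infDist z D1 := by
        intro hlt
        exact hzMc ⟨hzg, hlt⟩
      exact mem_D0_of_bdry hm hρ ⟨hD0g, hD1g, hD0ne, hD1ne, hdisj, hax3, hax4, hax5⟩
        hxM.1 hzg hdxz hxM.2 hzM
    · intro x hx0
      obtain ⟨z, hz1, hdxz⟩ := hax3 x hx0
      exact ⟨hD0M x hx0, z, ⟨hD1M z hz1, hD1g hz1⟩, hdxz⟩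
  refine ⟨hb0, ?_⟩
  apply Set.eq_of_subset_of_subset
  · rintro z ⟨⟨hzMc, hzg⟩, hzd⟩
    rw [hb0] at hzd
    -- infDist z D0 = ρ
    have hzD0 : z ∉ D0 := by
      intro hc
      rw [Metric.infDist_zero_of_mem hc] at hzd
      exact absurd hzd.symm hρ.ne'
    obtain ⟨n0z, a, haD0, hda, hinf0z⟩ := infDist_grid_attained hm hρ hzg hD0g hD0n
    have hn0eq : ρ * (n0z:ℝ) = ρ := by rw [← hinf0z, hzd]
    have hdza : dist z a = ρ := by rw [hda, hn0eq]
    by_contra hzD1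
    have hzMlt : Metric.infDist z D1 ≤ Metric.infDist z D0 := by
      by_contra hc
      push_neg at hc
      exact hzMc ⟨hzg, hc⟩
    obtain ⟨n1z, b, hbD1, hdb, hinf1z⟩ := infDist_grid_attained hm hρ hzg hD1g hD1n
    have hdzb : dist z b = ρ := by
      have h1 : ρ ≤ Metric.infDist z D1 := rho_le_infDist hm hρ hzg hzD1 hD1g hD1n
      have h2 : Metric.infDist z D1 ≤ ρ := le_trans hzMlt (le_of_eq hzd)
      rw [hdb, ← hinf1z]
      linarith
    -- two-step path a → z → b
    have hs1 : IsPath m ρ a z 1 (fun ℓ => if ℓ = 0 then a else z) :=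
      step_path hρ (hD0g haD0) hzg (by rw [dist_comm]; exact le_of_eq hdza)
    have hs2 : IsPath m ρ z b 1 (fun ℓ => if ℓ = 0 then z else b) :=
      step_path hρ hzg (hD1g hbD1) (le_of_eq hdzb)
    have hpath : IsPath m ρ a b 2
        (pconcat 1 (fun ℓ => if ℓ = 0 then a else z) (fun ℓ => if ℓ = 0 then z else b)) :=
      hs1.concat hs2
    obtain ⟨ℓ, hl0, hlk, hmem⟩ := hax5 a haD0 b hbD1 2 _ hpath (by omega)
    have hℓ1 : ℓ = 1 := by omega
    subst hℓ1
    have : pconcat 1 (fun ℓ => if ℓ = 0 then a else z) (fun ℓ => if ℓ = 0 then z else b) 1 = z := by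
      rw [pconcat_le _ _ le_rfl]
      norm_num
    rw [this] at hmem
    rcases hmem with hq | hq
    · exact hzD0 hq
    · exact hzD1 hq
  · intro z hz1
    refine ⟨⟨hD1M z hz1, hD1g hz1⟩, ?_⟩
    rw [hb0]
    have h1 : ρ ≤ Metric.infDist z D0 :=
      rho_le_infDist hm hρ (hD1g hz1) (hnotD0 z hz1) hD0g hD0n
    obtain ⟨x, hx0, hdxz⟩ := hax4 z hz1
    have h2 : Metric.infDist z D0 ≤ ρ := by
      calc Metric.infDist z D0 ≤ dist z x := Metric.infDist_le_dist_of_mem hx0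
      _ = ρ := by rw [dist_comm]; exact hdxz
    linarith
end
end

section
/- Let m ≥ 1, let ρ̌ > 0 and ρ̂ > 0 with ρ̂/ρ̌ an integer ≥ 2. Then for every integer k ≥ 0, every x̌ ∈ Δ_ρ̌ and every v ∈ ℝ^m with ‖v − x̌‖_∞ ≤ (k+1)ρ̌/2, there exists x̂ ∈ Δ_ρ̂ such that ‖x̂ − x̌‖_∞ ≤ (ρ̂ + kρ̌)/2 and ‖v − x̂‖_∞ ≤ ρ̂/2. -/
noncomputable section

/-- `B_δ(A)`: the closed `δ`-neighbourhood of `A` in the maximum norm. -/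
def nbhd (m : ℕ) (δ : ℝ) (A : Set (Fin m → ℝ)) : Set (Fin m → ℝ) :=
  {x | Metric.infDist x A ≤ δ}

/-- The restriction operator `R(M̌) = B_{ρ̂/2}(M̌) ∩ Δ_ρ̂`. -/
def Rop (m : ℕ) (rh : ℝ) (M : Set (Fin m → ℝ)) : Set (Fin m → ℝ) :=
  nbhd m (rh / 2) M ∩ grid m rh

/-- The interpolation operator `I(M̂) = B_{ρ̂/2}(M̂) ∩ Δ_ρ̌`. -/
def Iop (m : ℕ) (rc rh : ℝ) (M : Set (Fin m → ℝ)) : Set (Fin m → ℝ) :=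
  nbhd m (rh / 2) M ∩ grid m rc

set_option maxHeartbeats 1000000 in
lemma aux_pt (rc rh : ℝ) (hrc : 0 < rc) (n : ℕ) (hn : 2 ≤ n) (hq : rh = (n : ℝ) * rc)
    (k : ℕ) (p : ℤ) (v : ℝ) (hv : |v - rc * p| ≤ ((k : ℝ) + 1) * rc / 2) :
    ∃ q : ℤ, |v - rh * q| ≤ rh / 2 ∧ |rh * q - rc * p| ≤ (rh + (k : ℝ) * rc) / 2 := by
  have hn' : (2 : ℝ) ≤ (n : ℝ) := by exact_mod_cast hn
  have hrh : 0 < rh := by rw [hq]; positivity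
  have hk0 : 0 ≤ (k : ℝ) * rc := by positivity
  have hv1 : v - rc * p ≤ ((k : ℝ) + 1) * rc / 2 := (abs_le.mp hv).2
  have hv2 : rc * p - v ≤ ((k : ℝ) + 1) * rc / 2 := by
    have := (abs_le.mp hv).1; linarith
  have hE1 : rh * (v / rh - 1/2) = v - rh / 2 := by field_simp
  have hE2 : rh * (v / rh + 1/2) = v + rh / 2 := by field_simp
  rcases le_or_gt (rc * p) v with h | h
  · set q := ⌈v / rh - 1/2⌉ with hqdef
    have h1 : v / rh - 1/2 ≤ (q : ℝ) := Int.le_ceil _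
    have h2 : (q : ℝ) < v / rh + 1/2 := by
      have := Int.ceil_lt_add_one (v / rh - 1/2); rw [← hqdef] at this; linarith
    have hb1 : v - rh / 2 ≤ rh * q := by
      have := mul_le_mul_of_nonneg_left h1 hrh.le; rw [hE1] at this; exact this
    have hb2 : rh * q < v + rh / 2 := by
      have := mul_lt_mul_of_pos_left h2 hrh; rw [hE2] at this; exact this
    set t : ℤ := n * q - p with htdef
    have hteq : rh * q - rc * p = rc * t := by push_cast [htdef, hq]; ring
    have hw1 : rc * (t : ℝ) < rc * (((n : ℝ) + k + 1) / 2) := by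
      rw [← hteq]; linarith
    have ht1 : (t : ℝ) < ((n : ℝ) + k + 1) / 2 := (mul_lt_mul_iff_right₀ hrc).mp hw1
    have hz : 2 * t ≤ (n : ℤ) + k := by
      have h2t : ((2 * t : ℤ) : ℝ) < (((n : ℤ) + k + 1 : ℤ) : ℝ) := by push_cast; linarith
      have h2t' : (2 * t : ℤ) < (n : ℤ) + k + 1 := Int.cast_lt.mp h2t
      omega
    have hcast : 2 * (t : ℝ) ≤ (n : ℝ) + k := by exact_mod_cast hz
    have hup := mul_le_mul_of_nonneg_left hcast hrc.le
    have hlow : -(rc * (t : ℝ)) ≤ rh / 2 := by rw [← hteq]; linarith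
    refine ⟨q, abs_le.mpr ⟨by linarith, by linarith⟩, ?_⟩
    rw [hteq]
    exact abs_le.mpr ⟨by nlinarith [hup, hq, hk0, hlow], by nlinarith [hup, hq, hk0, hlow]⟩
  · set q := ⌊v / rh + 1/2⌋ with hqdef
    have h1 : (q : ℝ) ≤ v / rh + 1/2 := Int.floor_le _
    have h2 : v / rh - 1/2 < (q : ℝ) := by
      have := Int.sub_one_lt_floor (v / rh + 1/2); rw [← hqdef] at this; linarith
    have hb1 : rh * q ≤ v + rh / 2 := by
      have := mul_le_mul_of_nonneg_left h1 hrh.le; rw [hE2] at this; exact this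
    have hb2 : v - rh / 2 < rh * q := by
      have := mul_lt_mul_of_pos_left h2 hrh; rw [hE1] at this; exact this
    set t : ℤ := n * q - p with htdef
    have hteq : rh * q - rc * p = rc * t := by push_cast [htdef, hq]; ring
    have hw1 : rc * (-(t : ℝ)) < rc * (((n : ℝ) + k + 1) / 2) := by
      have hx : rc * (-(t : ℝ)) = rc * p - rh * q := by linarith [hteq]
      rw [hx]; linarith
    have ht1 : -(t : ℝ) < ((n : ℝ) + k + 1) / 2 := (mul_lt_mul_iff_right₀ hrc).mp hw1
    have hz : -(2 * t) ≤ (n : ℤ) + k := by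
      have h2t : ((-(2 * t) : ℤ) : ℝ) < (((n : ℤ) + k + 1 : ℤ) : ℝ) := by push_cast; linarith
      have h2t' : -(2 * t : ℤ) < (n : ℤ) + k + 1 := Int.cast_lt.mp h2t
      omega
    have hcast : -(2 * (t : ℝ)) ≤ (n : ℝ) + k := by exact_mod_cast hz
    have hup := mul_le_mul_of_nonneg_left hcast hrc.le
    have hlow : rc * (t : ℝ) ≤ rh / 2 := by rw [← hteq]; linarith
    refine ⟨q, abs_le.mpr ⟨by linarith, by linarith⟩, ?_⟩
    rw [hteq]
    exact abs_le.mpr ⟨by nlinarith [hup, hq, hk0, hlow], by nlinarith [hup, hq, hk0, hlow]⟩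

theorem stmt12 (m : ℕ) (hm : 1 ≤ m) (rc rh : ℝ) (hrc : 0 < rc) (hrh : 0 < rh)
    (n : ℕ) (hn : 2 ≤ n) (hq : rh = (n : ℝ) * rc)
    (k : ℕ) (xc : Fin m → ℝ) (hxc : xc ∈ grid m rc)
    (v : Fin m → ℝ) (hv : dist v xc ≤ ((k : ℝ) + 1) * rc / 2) :
    ∃ xh ∈ grid m rh,
      dist xh xc ≤ (rh + (k : ℝ) * rc) / 2 ∧ dist v xh ≤ rh / 2 := by
  have H : ∀ j, ∃ b : ℝ, (∃ q : ℤ, b = rh * q) ∧ |v j - b| ≤ rh / 2 ∧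
      |b - xc j| ≤ (rh + (k : ℝ) * rc) / 2 := by
    intro j
    obtain ⟨p, hp⟩ := hxc j
    have hvj : |v j - rc * p| ≤ ((k : ℝ) + 1) * rc / 2 := by
      have h1 : dist (v j) (xc j) ≤ dist v xc := dist_le_pi_dist v xc j
      rw [Real.dist_eq, hp] at h1
      linarith
    obtain ⟨q, hq1, hq2⟩ := aux_pt rc rh hrc n hn hq k p (v j) hvj
    exact ⟨rh * q, ⟨q, rfl⟩, hq1, by rw [hp]; exact hq2⟩
  choose b hb1 hb2 hb3 using H
  refine ⟨b, hb1, ?_, ?_⟩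
  · rw [dist_pi_le_iff (by positivity)]
    intro j
    rw [Real.dist_eq]
    exact hb3 j
  · rw [dist_pi_le_iff (by positivity)]
    intro j
    rw [Real.dist_eq]
    exact hb2 j
end
end

section
/- Let m ≥ 1, let ρ̌ > 0 and ρ̂ > 0 with ρ̂/ρ̌ an integer ≥ 2, and let R(M̌) := B_{ρ̂/2}(M̌) ∩ Δ_ρ̂ for nonempty M̌ ⊆ Δ_ρ̌. Then for every nonempty M̌ ⊆ Δ_ρ̌: (i) R(M̌) is nonempty and dist_H(R(M̌), M̌) ≤ ρ̂/2; (ii) R(M̌) minimizes M̂ ↦ dist_H(M̂, M̌) over all nonempty M̂ ⊆ Δ_ρ̂; and (iii) every nonempty M̂ ⊆ Δ_ρ̂ that minimizes M̂ ↦ dist_H(M̂, M̌) satisfies M̂ ⊆ R(M̌). -/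
/-!
Coordinatewise, a point of `ρ̂ℤ` within `ρ̂/2` of `u` is a nearest point of `ρ̂ℤ` to `u`; hence a
point `g ∈ Δ_ρ̂` with `‖x - g‖ ≤ ρ̂/2` is a nearest point of `Δ_ρ̂` to `x`, and for every
`M̂ ⊆ Δ_ρ̂` and `x ∈ M̌` we get `dist_H(M̂, M̌) ≥ dist(x, M̂) ≥ ‖x - g‖`. Both halves of
`dist_H(R(M̌), M̌)` are realised by such pairs `(x, g)`: rounding `x ∈ M̌` gives `g ∈ R(M̌)`, and
every `g ∈ R(M̌)` has an actual partner `x ∈ M̌` with `‖x - g‖ ≤ ρ̂/2`, because distances between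
points of `Δ_ρ̌ ⊇ Δ_ρ̂` lie in `ρ̌ℕ`. This gives (i) and (ii); (iii) follows because an optimal
`M̂` is within `ρ̂/2` of `M̌` by (i).
-/

noncomputable section

open Metric

section Grid

variable {m : ℕ} {ρ : ℝ}

lemma grid_subset_grid_of_eq_mul {rc rh : ℝ} {n : ℕ} (hq : rh = n * rc) :
    grid m rh ⊆ grid m rc := by
  intro y hy j
  obtain ⟨k, hk⟩ := hy j
  exact ⟨n * k, by rw [hk, hq]; push_cast; ring⟩

lemma exists_mem_grid_dist_le_half (hρ : 0 < ρ) (x : Fin m → ℝ) :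
    ∃ g ∈ grid m ρ, dist x g ≤ ρ / 2 := by
  refine ⟨fun j => ρ * round (x j / ρ), fun j => ⟨round (x j / ρ), rfl⟩, ?_⟩
  refine (dist_pi_le_iff (by positivity)).2 fun j => ?_
  have hround : |x j / ρ - round (x j / ρ)| ≤ 1 / 2 := abs_sub_round _
  calc dist (x j) (ρ * round (x j / ρ)) = ρ * |x j / ρ - round (x j / ρ)| := by
        rw [Real.dist_eq, ← abs_of_pos hρ, ← abs_mul, abs_of_pos hρ, mul_sub,
          mul_div_cancel₀ _ hρ.ne']
    _ ≤ ρ / 2 := by nlinarith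

lemma abs_sub_le_abs_sub_of_abs_sub_le_half (hρ : 0 < ρ) {u : ℝ} {a b : ℤ}
    (h : |u - ρ * a| ≤ ρ / 2) : |u - ρ * a| ≤ |u - ρ * b| := by
  rcases eq_or_ne a b with rfl | hab
  · rfl
  have hone : (1 : ℝ) ≤ |(a : ℝ) - b| := by exact_mod_cast Int.one_le_abs (sub_ne_zero.2 hab)
  have htri : ρ * |(a : ℝ) - b| ≤ |u - ρ * a| + |u - ρ * b| := by
    calc ρ * |(a : ℝ) - b| = |(u - ρ * b) - (u - ρ * a)| := by
          rw [← abs_of_pos hρ, ← abs_mul, abs_of_pos hρ]; ring_nf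
      _ ≤ |u - ρ * b| + |u - ρ * a| := abs_sub _ _
      _ = |u - ρ * a| + |u - ρ * b| := add_comm _ _
  nlinarith

lemma dist_le_dist_of_mem_grid (hρ : 0 < ρ) {x y g : Fin m → ℝ} (hy : y ∈ grid m ρ)
    (hg : g ∈ grid m ρ) (h : dist x y ≤ ρ / 2) : dist x y ≤ dist x g := by
  refine (dist_pi_le_iff dist_nonneg).2 fun j => ?_
  obtain ⟨a, ha⟩ := hy j
  obtain ⟨b, hb⟩ := hg j
  have hj : |x j - ρ * a| ≤ ρ / 2 := by
    rw [← ha, ← Real.dist_eq]; exact (dist_le_pi_dist x y j).trans h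
  calc dist (x j) (y j) = |x j - ρ * a| := by rw [Real.dist_eq, ha]
    _ ≤ |x j - ρ * b| := abs_sub_le_abs_sub_of_abs_sub_le_half hρ hj
    _ = dist (x j) (g j) := by rw [Real.dist_eq, hb]
    _ ≤ dist x g := dist_le_pi_dist x g j

lemma edist_le_hausdorffEDist_of_mem_grid (hρ : 0 < ρ) {M Mh : Set (Fin m → ℝ)}
    (hMh : Mh ⊆ grid m ρ) {x g : Fin m → ℝ} (hx : x ∈ M) (hg : g ∈ grid m ρ)
    (h : dist x g ≤ ρ / 2) : edist x g ≤ hausdorffEDist Mh M := by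
  calc edist x g ≤ infEDist x Mh := le_infEDist.2 fun z hz => by
        rw [edist_dist, edist_dist]
        exact ENNReal.ofReal_le_ofReal (dist_le_dist_of_mem_grid hρ hg (hMh hz) h)
    _ ≤ hausdorffEDist M Mh := infEDist_le_hausdorffEDist_of_mem hx
    _ = hausdorffEDist Mh M := hausdorffEDist_comm

lemma dist_le_of_mem_grid_of_dist_lt (hρ : 0 < ρ) {n : ℕ} {x y : Fin m → ℝ}
    (hx : x ∈ grid m ρ) (hy : y ∈ grid m ρ) (h : dist x y < (n + 1) * ρ / 2) :
    dist x y ≤ n * ρ / 2 := by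
  refine (dist_pi_le_iff (by positivity)).2 fun j => ?_
  obtain ⟨a, ha⟩ := hx j
  obtain ⟨b, hb⟩ := hy j
  have hj : dist (x j) (y j) = ρ * |(a : ℝ) - b| := by
    rw [Real.dist_eq, ha, hb, ← mul_sub, abs_mul, abs_of_pos hρ]
  have hlt : ρ * (2 * |(a : ℝ) - b|) < ρ * (n + 1) := by
    have := (dist_le_pi_dist x y j).trans_lt h
    rw [hj] at this; linarith
  have hint : 2 * |a - b| ≤ n := by
    have : (2 * |a - b| : ℤ) < n + 1 := by exact_mod_cast lt_of_mul_lt_mul_left hlt hρ.le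
    omega
  have hreal : 2 * |(a : ℝ) - b| ≤ n := by exact_mod_cast hint
  rw [hj]; nlinarith

lemma exists_mem_dist_le_of_infDist_le (hρ : 0 < ρ) {n : ℕ} {M : Set (Fin m → ℝ)}
    (hM : M ⊆ grid m ρ) (hne : M.Nonempty) {y : Fin m → ℝ} (hy : y ∈ grid m ρ)
    (h : infDist y M ≤ n * ρ / 2) : ∃ x ∈ M, dist y x ≤ n * ρ / 2 := by
  have hlt : infDist y M < (n + 1) * ρ / 2 := h.trans_lt (by linarith)
  obtain ⟨x, hx, hyx⟩ := (infDist_lt_iff hne).1 hlt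
  exact ⟨x, hx, dist_le_of_mem_grid_of_dist_lt hρ hy (hM hx) hyx⟩

end Grid

section Restriction

variable {m : ℕ} {rc rh : ℝ} {Mc : Set (Fin m → ℝ)}

lemma exists_mem_Rop_dist_le (hrh : 0 < rh) {x : Fin m → ℝ} (hx : x ∈ Mc) :
    ∃ g ∈ Rop m rh Mc, dist x g ≤ rh / 2 := by
  obtain ⟨g, hg, hxg⟩ := exists_mem_grid_dist_le_half hrh x
  exact ⟨g, ⟨(infDist_le_dist_of_mem hx).trans (dist_comm g x ▸ hxg), hg⟩, hxg⟩

lemma exists_dist_le_of_mem_Rop (hrc : 0 < rc) {n : ℕ} (hq : rh = n * rc)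
    (hMc : Mc ⊆ grid m rc) (hne : Mc.Nonempty) {y : Fin m → ℝ} (hy : y ∈ Rop m rh Mc) :
    ∃ x ∈ Mc, dist x y ≤ rh / 2 := by
  have hy' : infDist y Mc ≤ n * rc / 2 := hq ▸ hy.1
  obtain ⟨x, hx, hyx⟩ :=
    exists_mem_dist_le_of_infDist_le hrc hMc hne (grid_subset_grid_of_eq_mul hq hy.2) hy'
  exact ⟨x, hx, by rw [dist_comm, hq]; exact hyx⟩

lemma hausdorffEDist_Rop_le (hrc : 0 < rc) (hrh : 0 < rh) {n : ℕ} (hq : rh = n * rc)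
    (hMc : Mc ⊆ grid m rc) (hne : Mc.Nonempty) {r : ENNReal}
    (h : ∀ x ∈ Mc, ∀ g ∈ grid m rh, dist x g ≤ rh / 2 → edist x g ≤ r) :
    hausdorffEDist (Rop m rh Mc) Mc ≤ r := by
  refine hausdorffEDist_le_of_mem_edist (fun y hy => ?_) (fun x hx => ?_)
  · obtain ⟨x, hx, hxy⟩ := exists_dist_le_of_mem_Rop hrc hq hMc hne hy
    exact ⟨x, hx, edist_comm x y ▸ h x hx y hy.2 hxy⟩
  · obtain ⟨g, hg, hxg⟩ := exists_mem_Rop_dist_le hrh hx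
    exact ⟨g, hg, h x hx g hg.2 hxg⟩

lemma subset_Rop_of_hausdorffEDist_le (hrh : 0 ≤ rh) {Mh : Set (Fin m → ℝ)}
    (hMh : Mh ⊆ grid m rh) (h : hausdorffEDist Mh Mc ≤ ENNReal.ofReal (rh / 2)) :
    Mh ⊆ Rop m rh Mc := fun y hy =>
  ⟨ENNReal.toReal_le_of_le_ofReal (by positivity)
    ((infEDist_le_hausdorffEDist_of_mem hy).trans h), hMh hy⟩

end Restriction

theorem stmt13_general (m : ℕ) (rc rh : ℝ) (hrc : 0 < rc) (hrh : 0 < rh)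
    (n : ℕ) (hq : rh = (n : ℝ) * rc)
    (Mc : Set (Fin m → ℝ)) (hMc : Mc ⊆ grid m rc) (hne : Mc.Nonempty) :
    -- (i) `R(M̌)` is nonempty and is within Hausdorff distance `ρ̂/2` of `M̌`
    ((Rop m rh Mc).Nonempty ∧
      EMetric.hausdorffEdist (Rop m rh Mc) Mc ≤ ENNReal.ofReal (rh / 2)) ∧
    -- (ii) `R(M̌)` is a best approximation of `M̌` among nonempty subsets of `Δ_ρ̂`
    (∀ Mh : Set (Fin m → ℝ), Mh ⊆ grid m rh → Mh.Nonempty →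
      EMetric.hausdorffEdist (Rop m rh Mc) Mc ≤ EMetric.hausdorffEdist Mh Mc) ∧
    -- (iii) every best approximation is contained in `R(M̌)`
    (∀ Mh : Set (Fin m → ℝ), Mh ⊆ grid m rh → Mh.Nonempty →
      (∀ Mh' : Set (Fin m → ℝ), Mh' ⊆ grid m rh → Mh'.Nonempty →
        EMetric.hausdorffEdist Mh Mc ≤ EMetric.hausdorffEdist Mh' Mc) →
      Mh ⊆ Rop m rh Mc) := by
  have hclose : hausdorffEDist (Rop m rh Mc) Mc ≤ ENNReal.ofReal (rh / 2) :=
    hausdorffEDist_Rop_le hrc hrh hq hMc hne fun x _ g _ hxg =>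
      (edist_dist x g).symm ▸ ENNReal.ofReal_le_ofReal hxg
  have hRne : (Rop m rh Mc).Nonempty :=
    (exists_mem_Rop_dist_le hrh hne.some_mem).imp fun _ hg => hg.1
  refine ⟨⟨hRne, hclose⟩, fun Mh hMh _ => ?_, fun Mh hMh _ hopt => ?_⟩
  · exact hausdorffEDist_Rop_le hrc hrh hq hMc hne fun x hx g hg hxg =>
      edist_le_hausdorffEDist_of_mem_grid hrh hMh hx hg hxg
  · exact subset_Rop_of_hausdorffEDist_le hrh.le hMh
      ((hopt _ Set.inter_subset_right hRne).trans hclose)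

theorem stmt13 (m : ℕ) (hm : 1 ≤ m) (rc rh : ℝ) (hrc : 0 < rc) (hrh : 0 < rh)
    (n : ℕ) (hn : 2 ≤ n) (hq : rh = (n : ℝ) * rc)
    (Mc : Set (Fin m → ℝ)) (hMc : Mc ⊆ grid m rc) (hne : Mc.Nonempty) :
    -- (i) `R(M̌)` is nonempty and is within Hausdorff distance `ρ̂/2` of `M̌`
    ((Rop m rh Mc).Nonempty ∧
      EMetric.hausdorffEdist (Rop m rh Mc) Mc ≤ ENNReal.ofReal (rh / 2)) ∧
    -- (ii) `R(M̌)` is a best approximation of `M̌` among nonempty subsets of `Δ_ρ̂`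
    (∀ Mh : Set (Fin m → ℝ), Mh ⊆ grid m rh → Mh.Nonempty →
      EMetric.hausdorffEdist (Rop m rh Mc) Mc ≤ EMetric.hausdorffEdist Mh Mc) ∧
    -- (iii) every best approximation is contained in `R(M̌)`
    (∀ Mh : Set (Fin m → ℝ), Mh ⊆ grid m rh → Mh.Nonempty →
      (∀ Mh' : Set (Fin m → ℝ), Mh' ⊆ grid m rh → Mh'.Nonempty →
        EMetric.hausdorffEdist Mh Mc ≤ EMetric.hausdorffEdist Mh' Mc) →
      Mh ⊆ Rop m rh Mc) :=
  stmt13_general m rc rh hrc hrh n hq Mc hMc hne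
end
end
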